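/- arXiv:1309.2047 — 6 statements merged into one kernel-verified Lean document; each statement's English description precedes it below -/
import Mathlib

section
/- The diameter graph of a finite planar point set contains no even cycle: let X ⊆ ℝ² be a finite set with at least two points and let D(X) = max A(X) be its diameter. Then for every k ≥ 2 there do not exist 2k pairwise distinct points P₁, P₂, …, P_{2k} ∈ X with dist(P_i, P_{i+1}) = D(X) for all i = 1, …, 2k (indices taken cyclically, so P_{2k+1} = P₁). -/
/-!
Any two diameter segments of a planar set meet: apply Radon's theorem to their four endpoints;
by strict convexity of the norm each Radon configuration yields a common point.

Given a cycle `P 0, P 1, …, P (2k+3)` of diameters, no other vertex lies on the line `ℓ` through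
`P 0` and `P 1`: such a point would lie strictly between `P 0` and `P 1` and hence be at distance
less than the diameter from every point. Each of the `2k+1` edges of the path
`P 2, …, P (2k+3)` therefore crosses `ℓ`, which puts `P 2` and `P (2k+3)` on opposite sides of `ℓ`.
But the diameters `P 1 P 2` and `P (2k+3) P 0` meet, and a common point of two segments leaving
`ℓ` from distinct points of `ℓ` lies off `ℓ`, on the side of both far endpoints.
-/

open Set Module Function AffineMap Metric

namespace AffineSubspace

variable {R V P : Type*} [Field R] [LinearOrder R] [IsStrictOrderedRing R] [AddCommGroup V]
  [Module R V] [AddTorsor V P] {s : AffineSubspace R P}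

theorem _root_.Wbtw.sSameSide₂₃ {x y z : P} (h : Wbtw R x y z) (hx : x ∈ s) (hz : z ∉ s)
    (hyx : y ≠ x) : s.SSameSide y z := by
  obtain ⟨t, ⟨ht0, -⟩, rfl⟩ := h
  refine sSameSide_lineMap_left hx hz (ht0.lt_of_ne ?_)
  rintro rfl
  exact hyx (lineMap_apply_zero x z)

theorem sSameSide_of_wbtw_of_wbtw {a b c d x : P} (hbxc : Wbtw R b x c) (haxd : Wbtw R a x d)
    (ha : a ∈ s) (hb : b ∈ s) (hc : c ∉ s) (hd : d ∉ s) (hab : a ≠ b) : s.SSameSide c d := by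
  by_cases hxb : x = b
  · subst hxb
    exact absurd hb (haxd.sSameSide₂₃ ha hd hab.symm).left_notMem
  have hxc := hbxc.sSameSide₂₃ hb hc hxb
  have hxd := haxd.sSameSide₂₃ ha hd fun hxa => hxc.left_notMem (hxa ▸ ha)
  exact hxc.symm.trans hxd

theorem sOppSide_of_forall_sOppSide_succ {Q : ℕ → P} {l : ℕ}
    (h : ∀ j < 2 * l + 1, s.SOppSide (Q j) (Q (j + 1))) : s.SOppSide (Q 0) (Q (2 * l + 1)) := by
  induction l with
  | zero => exact h 0 one_pos
  | succ l ih =>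
    have hsame : s.SSameSide (Q 0) (Q (2 * l + 2)) :=
      (ih fun j hj => h j (by omega)).trans (h (2 * l + 1) (by omega))
    exact hsame.trans_sOppSide (h (2 * l + 2) (by omega))

end AffineSubspace

section Metric

variable {V P : Type*} [NormedAddCommGroup V] [NormedSpace ℝ V] [MetricSpace P]
  [NormedAddTorsor V P]

theorem sbtw_of_mem_affineSpan_pair_of_dist_le {a b p : P} (hp : p ∈ line[ℝ, a, b])
    (hpa : p ≠ a) (hpb : p ≠ b) (ha : dist p a ≤ dist a b) (hb : dist p b ≤ dist a b) :
    Sbtw ℝ a p b := by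
  rcases (collinear_insert_of_mem_affineSpan_pair hp).wbtw_or_wbtw_or_wbtw with h | h | h
  · exact absurd (dist_le_zero.1 (by linarith [h.dist_add_dist])) hpa
  · exact absurd (dist_le_zero.1 (by linarith [h.dist_add_dist, dist_comm a p, dist_comm b p])) hpb
  · exact ⟨h.symm, hpa, hpb⟩

end Metric

section Diameters

variable {E : Type*} [NormedAddCommGroup E] [NormedSpace ℝ E]

theorem mem_segment_of_mem_convexHull_of_dist_le {a b c d : E} (h : a ∈ convexHull ℝ {b, c, d})
    (hc : dist b c ≤ dist b a) (hd : dist b d ≤ dist b a) : a ∈ segment ℝ c d := by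
  rw [convexHull_insert (insert_nonempty c {d}), convexHull_pair, mem_convexJoin] at h
  obtain ⟨b', rfl, y, hy, hay⟩ := h
  have hby : dist b' y ≤ dist b' a := mem_closedBall'.1 <|
    (convex_closedBall b' _).segment_subset (mem_closedBall'.2 hc) (mem_closedBall'.2 hd) hy
  have := dist_add_dist_of_mem_segment hay
  rwa [dist_le_zero.1 (by linarith : dist a y ≤ 0)]

theorem mem_segment_of_mem_segment_of_dist_add_dist_le [StrictConvexSpace ℝ E] {a b c d x : E}
    (hac : x ∈ segment ℝ a c) (hbd : x ∈ segment ℝ b d)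
    (h : dist a c + dist b d ≤ dist a b + dist c d) : x ∈ segment ℝ a b ∧ x ∈ segment ℝ c d := by
  have := dist_add_dist_of_mem_segment hac
  have := dist_add_dist_of_mem_segment hbd
  have := dist_triangle a x b
  have := dist_triangle c x d
  simp only [mem_segment_iff_wbtw, ← dist_add_dist_eq_iff]
  constructor <;> linarith [dist_comm b x, dist_comm c x]

theorem exists_radon_partition_fin_four (hE : finrank ℝ E = 2) (f : Fin 4 → E) :
    ∃ I : Set (Fin 4), 0 ∈ I ∧ (convexHull ℝ (f '' I) ∩ convexHull ℝ (f '' Iᶜ)).Nonempty := by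
  have : FiniteDimensional ℝ E := .of_finrank_pos (by omega)
  have hdep : ¬ AffineIndependent ℝ f := fun h => by
    have := h.card_le_finrank_succ
    have := Submodule.finrank_le (vectorSpan ℝ (range f))
    simp only [Fintype.card_fin, hE] at *
    omega
  obtain ⟨I, hI⟩ := Convex.radon_partition hdep
  by_cases h0 : 0 ∈ I
  · exact ⟨I, h0, hI⟩
  · exact ⟨Iᶜ, h0, by rwa [compl_compl, inter_comm]⟩

theorem segment_inter_segment_nonempty_of_dist_le [StrictConvexSpace ℝ E] (hE : finrank ℝ E = 2)
    {a b c d : E} {D : ℝ} (hab : dist a b = D) (hcd : dist c d = D) (hac : dist a c ≤ D)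
    (had : dist a d ≤ D) (hbc : dist b c ≤ D) (hbd : dist b d ≤ D) :
    (segment ℝ a b ∩ segment ℝ c d).Nonempty := by
  obtain ⟨I, h0, x, hxI, hxJ⟩ := exists_radon_partition_fin_four hE ![a, b, c, d]
  have hull : ∀ {J : Set (Fin 4)} (T : Set E), x ∈ convexHull ℝ (![a, b, c, d] '' J) →
      (∀ i ∈ J, ![a, b, c, d] i ∈ T) → x ∈ convexHull ℝ T :=
    fun _ hx hJT => convexHull_mono (image_subset_iff.2 hJT) hx
  by_cases h1 : 1 ∈ I <;> by_cases h2 : 2 ∈ I <;> by_cases h3 : 3 ∈ I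
  · simpa using hull ∅ hxJ (by intro i hi; fin_cases i <;> simp_all)
  · obtain rfl : x = d := by simpa using hull {d} hxJ (by intro i hi; fin_cases i <;> simp_all)
    have hx := hull {c, a, b} hxI (by intro i hi; fin_cases i <;> simp_all)
    exact ⟨x, mem_segment_of_mem_convexHull_of_dist_le hx (by linarith [dist_comm a c])
      (by linarith [dist_comm b c]), right_mem_segment ℝ c x⟩
  · obtain rfl : x = c := by simpa using hull {c} hxJ (by intro i hi; fin_cases i <;> simp_all)
    have hx := hull {d, a, b} hxI (by intro i hi; fin_cases i <;> simp_all)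
    exact ⟨x, mem_segment_of_mem_convexHull_of_dist_le hx
      (by linarith [dist_comm a d, dist_comm x d]) (by linarith [dist_comm b d, dist_comm x d]),
      left_mem_segment ℝ x d⟩
  · exact ⟨x, by simpa using hull {a, b} hxI (by intro i hi; fin_cases i <;> simp_all),
      by simpa using hull {c, d} hxJ (by intro i hi; fin_cases i <;> simp_all)⟩
  · obtain rfl : x = b := by simpa using hull {b} hxJ (by intro i hi; fin_cases i <;> simp_all)
    have hx := hull {a, c, d} hxI (by intro i hi; fin_cases i <;> simp_all)
    exact ⟨x, right_mem_segment ℝ a x, mem_segment_of_mem_convexHull_of_dist_le hx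
      (by linarith [dist_comm a x]) (by linarith [dist_comm a x])⟩
  · have hxac : x ∈ segment ℝ a c := by
      simpa using hull {a, c} hxI (by intro i hi; fin_cases i <;> simp_all)
    have hxbd : x ∈ segment ℝ b d := by
      simpa using hull {b, d} hxJ (by intro i hi; fin_cases i <;> simp_all)
    exact ⟨x, mem_segment_of_mem_segment_of_dist_add_dist_le hxac hxbd (by linarith)⟩
  · have hxad : x ∈ segment ℝ a d := by
      simpa using hull {a, d} hxI (by intro i hi; fin_cases i <;> simp_all)
    have hxbc : x ∈ segment ℝ b c := by
      simpa using hull {b, c} hxJ (by intro i hi; fin_cases i <;> simp_all)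
    rw [segment_symm ℝ c d]
    exact ⟨x, mem_segment_of_mem_segment_of_dist_add_dist_le hxad hxbc
      (by linarith [dist_comm c d])⟩
  · obtain rfl : x = a := by simpa using hull {a} hxI (by intro i hi; fin_cases i <;> simp_all)
    have hx := hull {b, c, d} hxJ (by intro i hi; fin_cases i <;> simp_all)
    exact ⟨x, left_mem_segment ℝ x b, mem_segment_of_mem_convexHull_of_dist_le hx
      (by linarith [dist_comm x b]) (by linarith [dist_comm x b])⟩

theorem notMem_affineSpan_pair_of_dist_le [StrictConvexSpace ℝ E] {a b p q : E} {D : ℝ}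
    (hab : dist a b = D) (hpq : dist p q = D) (hpa : p ≠ a) (hpb : p ≠ b) (hap : dist p a ≤ D)
    (hbp : dist p b ≤ D) (haq : dist a q ≤ D) (hbq : dist b q ≤ D) : p ∉ line[ℝ, a, b] := by
  intro hp
  have hsbtw := sbtw_of_mem_affineSpan_pair_of_dist_le hp hpa hpb (hab ▸ hap) (hab ▸ hbp)
  have := hsbtw.dist_lt_max_dist q
  linarith [max_le haq hbq]

theorem sOppSide_affineSpan_pair_of_dist_le [StrictConvexSpace ℝ E] (hE : finrank ℝ E = 2)
    {a b c d : E} {D : ℝ} (hab : dist a b = D) (hcd : dist c d = D) (hac : dist a c ≤ D)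
    (had : dist a d ≤ D) (hbc : dist b c ≤ D) (hbd : dist b d ≤ D) (hc : c ∉ line[ℝ, a, b])
    (hd : d ∉ line[ℝ, a, b]) : line[ℝ, a, b].SOppSide c d := by
  obtain ⟨x, hx, hx'⟩ := segment_inter_segment_nonempty_of_dist_le hE hab hcd hac had hbc hbd
  have hxs := (mem_segment_iff_wbtw.1 hx).mem_affineSpan
  exact Sbtw.sOppSide_of_notMem_of_mem ⟨mem_segment_iff_wbtw.1 hx', ne_of_mem_of_not_mem hxs hc,
    ne_of_mem_of_not_mem hxs hd⟩ hc hxs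

theorem sSameSide_affineSpan_pair_of_dist_le [StrictConvexSpace ℝ E] (hE : finrank ℝ E = 2)
    {a b c d : E} {D : ℝ} (hbc : dist b c = D) (hda : dist d a = D) (hbd : dist b d ≤ D)
    (hba : dist b a ≤ D) (hcd : dist c d ≤ D) (hca : dist c a ≤ D) (hab : a ≠ b)
    (hc : c ∉ line[ℝ, a, b]) (hd : d ∉ line[ℝ, a, b]) : line[ℝ, a, b].SSameSide c d := by
  obtain ⟨x, hx, hx'⟩ := segment_inter_segment_nonempty_of_dist_le hE hbc hda hbd hba hcd hca
  exact AffineSubspace.sSameSide_of_wbtw_of_wbtw (mem_segment_iff_wbtw.1 hx)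
    (mem_segment_iff_wbtw.1 hx').symm (left_mem_affineSpan_pair ℝ a b)
    (right_mem_affineSpan_pair ℝ a b) hc hd hab

open Fin.NatCast in
theorem not_injective_of_dist_add_one_eq [StrictConvexSpace ℝ E] (hE : finrank ℝ E = 2) {k : ℕ}
    {D : ℝ} {P : Fin (2 * k + 4) → E} (hle : ∀ i j, dist (P i) (P j) ≤ D)
    (hcyc : ∀ i, dist (P i) (P (i + 1)) = D) : ¬ Injective P := by
  intro hP
  have hab : dist (P 0) (P 1) = D := by simpa using hcyc 0
  let Q : ℕ → E := fun j => P (j + 2 : ℕ)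
  have hQ : ∀ j, dist (Q j) (Q (j + 1)) = D := fun j => by
    simpa [Q, add_right_comm] using hcyc (j + 2 : ℕ)
  have hfirst : dist (P 1) (Q 0) = D := by simpa [Q, one_add_one_eq_two] using hcyc 1
  have hlast : dist (Q (2 * k + 1)) (P 0) = D := by
    have hwrap : ((2 * k + 1 + 2 : ℕ) : Fin (2 * k + 4)) + 1 = 0 := by
      ext
      simp [Fin.val_add]
    have := hcyc (2 * k + 1 + 2 : ℕ)
    rwa [hwrap] at this
  have hQs : ∀ j ≤ 2 * k + 1, Q j ∉ line[ℝ, P 0, P 1] := by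
    intro j hj
    have hne : ∀ i : Fin (2 * k + 4), (i : ℕ) < 2 → Q j ≠ P i := fun i hi h => by
      have := congrArg Fin.val (hP h)
      rw [Fin.val_cast_of_lt (by omega)] at this
      omega
    exact notMem_affineSpan_pair_of_dist_le hab (hQ j) (hne 0 (by simp)) (hne 1 (by simp))
      (hle _ _) (hle _ _) (hle _ _) (hle _ _)
  have hopp : ∀ j < 2 * k + 1, line[ℝ, P 0, P 1].SOppSide (Q j) (Q (j + 1)) := fun j hj =>
    sOppSide_affineSpan_pair_of_dist_le hE hab (hQ j) (hle _ _) (hle _ _) (hle _ _) (hle _ _)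
      (hQs j (by omega)) (hQs (j + 1) (by omega))
  have hsame : line[ℝ, P 0, P 1].SSameSide (Q 0) (Q (2 * k + 1)) :=
    sSameSide_affineSpan_pair_of_dist_le hE hfirst hlast (hle _ _) (hle _ _) (hle _ _) (hle _ _)
      (hP.ne zero_ne_one) (hQs 0 (by omega)) (hQs _ le_rfl)
  exact hsame.not_sOppSide (AffineSubspace.sOppSide_of_forall_sOppSide_succ hopp)

end Diameters

theorem stmt_7_general (X : Set (EuclideanSpace ℝ (Fin 2))) (D : ℝ)
    (hD : IsGreatest {d : ℝ | ∃ p ∈ X, ∃ q ∈ X, p ≠ q ∧ dist p q = d} D)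
    (k : ℕ) :
    ¬ ∃ P : Fin (2 * k + 4) → EuclideanSpace ℝ (Fin 2),
      (∀ i, P i ∈ X) ∧ Function.Injective P ∧
      (∀ i, dist (P i) (P (i + 1)) = D) := by
  rintro ⟨P, hPX, hP, hcyc⟩
  refine not_injective_of_dist_add_one_eq finrank_euclideanSpace_fin (fun i j => ?_) hcyc hP
  rcases eq_or_ne (P i) (P j) with h | h
  · obtain ⟨p, -, q, -, -, rfl⟩ := hD.1
    simp [h]
  · exact hD.2 ⟨P i, hPX i, P j, hPX j, h, rfl⟩

/-- The diameter graph of a finite planar point set contains no even cycle: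
for every `k ≥ 2` (even length `2k+4`, `k ≥ 0` below) there is no cycle of
`2k` pairwise distinct points of `X` with consecutive points (cyclically)
at distance `D(X)`, where `D(X)` is the greatest element of
`A(X) = {dist p q : p ≠ q ∈ X}`. -/
theorem stmt_7 (X : Set (EuclideanSpace ℝ (Fin 2))) (hfin : X.Finite)
    (hcard : 2 ≤ X.ncard) (D : ℝ)
    (hD : IsGreatest {d : ℝ | ∃ p ∈ X, ∃ q ∈ X, p ≠ q ∧ dist p q = d} D)
    (k : ℕ) :
    ¬ ∃ P : Fin (2 * k + 4) → EuclideanSpace ℝ (Fin 2),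
      (∀ i, P i ∈ X) ∧ Function.Injective P ∧
      (∀ i, dist (P i) (P (i + 1)) = D) :=
  stmt_7_general X D hD k
end

section
/- Let X ⊆ ℝ² be a finite set with at least two points, let D(X) = max A(X) be its diameter, and suppose P₁, …, P_{2k+1} ∈ X are pairwise distinct points with dist(P_i, P_{i+1}) = D(X) for all i (indices cyclic), i.e., the diameter graph DG(X) contains an odd cycle C on these vertices. Then: (a) any two points of X not belonging to {P₁, …, P_{2k+1}} are at distance strictly less than D(X) from each other; and (b) every point of X not in {P₁, …, P_{2k+1}} is at distance D(X) from at most one of the points P₁, …, P_{2k+1}. -/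
/-!
Two diameters of a planar set with no common endpoint cross. In coordinates adapted to a
diameter `ab`, the set lies in the lens of the discs of radius `D` about `a` and `b`; a point of
the open segment `ab` has no point of the lens at distance `D`, and a chord of length `D` of the
lens cannot have both ends strictly on one side of `ab`, since the disc of radius `D` about the
higher end contains `a`, `b`, and hence the foot of the lower end.

So along a path of diameters avoiding the ends of a diameter `xy`, the side of the line `xy`
alternates, which is impossible around an odd cycle: this is (a). For (b), if `x` is at distance
`D` from `P i` and `P j`, one of the two arcs of the cycle from `P i` to `P j` has odd length,
so the side of the line through the next diameter `P (j + 1) P (j + 2)` alternates along it and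
its ends are on opposite sides, whereas both lie opposite to `x`. This fails only when the arc
misses `P (j + 1)` alone; then `x` and `P (j + 1)` are opposite vertices of a rhombus of side `D`
whose other diagonal is at most `D`, and the rhombus degenerates.
-/

local notation "ℝ²" => EuclideanSpace ℝ (Fin 2)

/- Coordinates of `p` in the frame with origin `a` and first axis along `b - a`, scaled by
`dist a b`; the sign of `frameY a b p` tells on which side of the line `ab` the point `p` lies. -/
def frameX (a b p : ℝ²) : ℝ := (b 0 - a 0) * (p 0 - a 0) + (b 1 - a 1) * (p 1 - a 1)

def frameY (a b p : ℝ²) : ℝ := (b 0 - a 0) * (p 1 - a 1) - (b 1 - a 1) * (p 0 - a 0)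

section Frame

variable (a b p q : ℝ²)

lemma dist_sq_eq_coord : dist p q ^ 2 = (p 0 - q 0) ^ 2 + (p 1 - q 1) ^ 2 := by
  rw [EuclideanSpace.dist_eq, Real.sq_sqrt (by positivity)]
  simp [Fin.sum_univ_two, Real.dist_eq, sq_abs]

lemma frame_sub_sq_add_sq :
    (frameX a b p - frameX a b q) ^ 2 + (frameY a b p - frameY a b q) ^ 2 =
      dist a b ^ 2 * dist p q ^ 2 := by
  simp only [frameX, frameY, dist_sq_eq_coord]
  ring

lemma frame_sq_add_sq_left :
    frameX a b p ^ 2 + frameY a b p ^ 2 = dist a b ^ 2 * dist p a ^ 2 := by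
  rw [← frame_sub_sq_add_sq]; simp [frameX, frameY]

lemma frame_sq_add_sq_right :
    (frameX a b p - dist a b ^ 2) ^ 2 + frameY a b p ^ 2 = dist a b ^ 2 * dist p b ^ 2 := by
  rw [← frame_sub_sq_add_sq, dist_sq_eq_coord a b]; simp only [frameX, frameY]; ring

lemma frameY_swap : frameY b a p = -frameY a b p := by simp only [frameY]; ring

end Frame

section Diameter

variable {X : Set ℝ²} {D : ℝ} {a b c d : ℝ²}

lemma frame_mem_lens (hX : ∀ p ∈ X, ∀ q ∈ X, dist p q ≤ D) (ha : a ∈ X) (hb : b ∈ X)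
    (hab : dist a b = D) {p : ℝ²} (hp : p ∈ X) :
    frameX a b p ^ 2 + frameY a b p ^ 2 ≤ D ^ 2 * D ^ 2 ∧
      (frameX a b p - D ^ 2) ^ 2 + frameY a b p ^ 2 ≤ D ^ 2 * D ^ 2 := by
  rw [← hab, frame_sq_add_sq_left, frame_sq_add_sq_right, hab]
  constructor <;> gcongr <;> apply hX <;> assumption

lemma frameY_ne_zero (hX : ∀ p ∈ X, ∀ q ∈ X, dist p q ≤ D) (ha : a ∈ X) (hb : b ∈ X)
    (hc : c ∈ X) (hd : d ∈ X) (hab : dist a b = D) (hcd : dist c d = D) (hca : c ≠ a)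
    (hcb : c ≠ b) : frameY a b c ≠ 0 := by
  intro hY
  have hD : 0 < D := (dist_pos.2 hca).trans_le (hX c hc a ha)
  obtain ⟨hcA, hcB⟩ := frame_mem_lens hX ha hb hab hc
  obtain ⟨hdA, hdB⟩ := frame_mem_lens hX ha hb hab hd
  have hcd' := frame_sub_sq_add_sq a b c d
  have hca' := frame_sq_add_sq_left a b c
  have hcb' := frame_sq_add_sq_right a b c
  rw [hY, hab, hcd] at hcd'
  rw [hY] at hcA hcB
  rw [hY, hab] at hca' hcb'
  have hca'' := mul_pos (pow_pos hD 2) (pow_pos (dist_pos.2 hca) 2)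
  have hcb'' := mul_pos (pow_pos hD 2) (pow_pos (dist_pos.2 hcb) 2)
  set π := frameX a b c
  set ρ := frameX a b d
  set ω := frameY a b d
  set M := D ^ 2
  have hM : 0 < M := by positivity
  have hπ : 0 < π := by nlinarith
  have hπM : π < M := by nlinarith
  have k1 : 2 * ρ ≤ π := by nlinarith
  have k2 : M + π ≤ 2 * ρ := by nlinarith
  linarith

lemma not_frameY_pos_of_dist_eq (hX : ∀ p ∈ X, ∀ q ∈ X, dist p q ≤ D) (ha : a ∈ X)
    (hb : b ∈ X) (hc : c ∈ X) (hd : d ∈ X) (hab : dist a b = D) (hcd : dist c d = D)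
    (hcY : 0 < frameY a b c) (hdY : 0 < frameY a b d) : False := by
  wlog hle : frameY a b d ≤ frameY a b c generalizing c d
  · exact this hd hc (by rwa [dist_comm]) hdY hcY (le_of_not_ge hle)
  obtain ⟨hcA, hcB⟩ := frame_mem_lens hX ha hb hab hc
  obtain ⟨hdA, hdB⟩ := frame_mem_lens hX ha hb hab hd
  have hcd' := frame_sub_sq_add_sq a b c d
  rw [hab, hcd] at hcd'
  set c₁ := frameX a b c
  set c₂ := frameY a b c
  set d₁ := frameX a b d
  set d₂ := frameY a b d
  set M := D ^ 2
  have hM : 0 < M := by nlinarith [sq_nonneg D]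
  have hd₁ : 0 ≤ d₁ ∧ d₁ ≤ M := by constructor <;> nlinarith
  -- the disc of radius `M` around `c` contains `(0, 0)` and `(M, 0)`, hence also `(d₁, 0)`
  have hcd₁ : (c₁ - d₁) ^ 2 + c₂ ^ 2 ≤ M ^ 2 := by
    have : M * ((c₁ - d₁) ^ 2 + c₂ ^ 2) = (M - d₁) * (c₁ ^ 2 + c₂ ^ 2) +
        d₁ * ((c₁ - M) ^ 2 + c₂ ^ 2) - d₁ * (M - d₁) * M := by ring
    nlinarith [mul_nonneg hd₁.1 (sub_nonneg.2 hd₁.2)]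
  nlinarith

theorem frameY_mul_frameY_neg (hX : ∀ p ∈ X, ∀ q ∈ X, dist p q ≤ D) (ha : a ∈ X)
    (hb : b ∈ X) (hc : c ∈ X) (hd : d ∈ X) (hab : dist a b = D) (hcd : dist c d = D)
    (hca : c ≠ a) (hcb : c ≠ b) (hda : d ≠ a) (hdb : d ≠ b) :
    frameY a b c * frameY a b d < 0 := by
  have same_side := not_frameY_pos_of_dist_eq hX ha hb hc hd hab hcd
  have same_side' := not_frameY_pos_of_dist_eq hX hb ha hc hd (by rwa [dist_comm]) hcd
  rw [frameY_swap a b c, frameY_swap a b d, neg_pos, neg_pos] at same_side'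
  rcases (frameY_ne_zero hX ha hb hc hd hab hcd hca hcb).lt_or_gt with hcY | hcY <;>
    rcases (frameY_ne_zero hX ha hb hd hc hab (by rwa [dist_comm]) hda hdb).lt_or_gt with
      hdY | hdY
  · exact (same_side' hcY hdY).elim
  · exact mul_neg_of_neg_of_pos hcY hdY
  · exact mul_neg_of_pos_of_neg hcY hdY
  · exact (same_side hcY hdY).elim

lemma eq_of_dist_eq_of_dist_eq (hX : ∀ p ∈ X, ∀ q ∈ X, dist p q ≤ D) {x z u w : ℝ²}
    (hx : x ∈ X) (hz : z ∈ X) (hu : u ∈ X) (hw : w ∈ X) (hxu : dist x u = D)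
    (hxw : dist x w = D) (hzu : dist z u = D) (hzw : dist z w = D) (huw : u ≠ w) : x = z := by
  by_contra hxz
  have hxz' := frame_sub_sq_add_sq u w x z
  have hxu' := frame_sq_add_sq_left u w x
  have hxw' := frame_sq_add_sq_right u w x
  have hzu' := frame_sq_add_sq_left u w z
  have hzw' := frame_sq_add_sq_right u w z
  have hL : 0 < dist u w := dist_pos.2 huw
  have hLD : dist u w ≤ D := hX u hu w hw
  have hxzD : dist x z ≤ D := hX x hx z hz
  have hxz0 : 0 < dist x z := dist_pos.2 hxz
  rw [hxu, hxw, hzu, hzw] at *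
  set L := dist u w
  set ξ₁ := frameX u w x
  set ξ₂ := frameY u w x
  set ζ₁ := frameX u w z
  set ζ₂ := frameY u w z
  have hL2 : L ^ 2 ≠ 0 := by positivity
  have hξ₁ : 2 * ξ₁ = L ^ 2 := by
    have : L ^ 2 * (2 * ξ₁ - L ^ 2) = 0 := by linear_combination hxu' - hxw'
    linarith [(mul_eq_zero.1 this).resolve_left hL2]
  have hζ₁ : 2 * ζ₁ = L ^ 2 := by
    have : L ^ 2 * (2 * ζ₁ - L ^ 2) = 0 := by linear_combination hzu' - hzw'
    linarith [(mul_eq_zero.1 this).resolve_left hL2]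
  -- `x` and `z` are mirror images in the line `uw`, with `ξ₂ ^ 2 = L ^ 2 * D ^ 2 - L ^ 4 / 4`
  have hζ₂ : ζ₂ = -ξ₂ := by
    have hne : ξ₂ - ζ₂ ≠ 0 := by
      intro h
      refine mul_ne_zero hL2 (pow_ne_zero 2 hxz0.ne') ?_
      rw [← hxz', h]
      nlinarith
    have : (ξ₂ - ζ₂) * (ξ₂ + ζ₂) = 0 := by
      linear_combination hxu' - hzu' - (ξ₁ + ζ₁) / 2 * (hξ₁ - hζ₁)
    linarith [(mul_eq_zero.1 this).resolve_left hne]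
  have hx₂ : 4 * ξ₂ ^ 2 ≤ L ^ 2 * D ^ 2 := by
    have : (ξ₁ - ζ₁) ^ 2 + (ξ₂ - ζ₂) ^ 2 ≤ L ^ 2 * D ^ 2 := by rw [hxz']; gcongr
    rw [hζ₂, show ξ₁ = ζ₁ by linarith] at this
    linarith
  have hLD2 : L ^ 2 * L ^ 2 ≤ L ^ 2 * D ^ 2 := by gcongr
  nlinarith [mul_pos (pow_pos hL 2) (pow_pos (hL.trans_le hLD) 2)]

lemma neg_one_pow_mul_mul_pos {g : ℕ → ℝ} {c : ℕ} (hc : 0 < c)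
    (h : ∀ m < c, g m * g (m + 1) < 0) : 0 < (-1) ^ c * (g 0 * g c) := by
  induction c, hc using Nat.le_induction with
  | base => simpa using h 0 one_pos
  | succ c hc ih =>
    have hstep := h c c.lt_succ_self
    have ih := ih fun m hm => h m (hm.trans c.lt_succ_self)
    have : 0 < (-1) ^ (c + 1) * (g 0 * g (c + 1)) * g c ^ 2 := by
      rw [pow_succ]; nlinarith
    exact pos_of_mul_pos_left this (sq_nonneg _)

theorem frameY_mul_frameY_neg_of_odd_path (hX : ∀ p ∈ X, ∀ q ∈ X, dist p q ≤ D)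
    {u v : ℝ²} (hu : u ∈ X) (hv : v ∈ X) (huv : dist u v = D) {R : ℕ → ℝ²} {c : ℕ}
    (hc : Odd c) (hR : ∀ m ≤ c, R m ∈ X ∧ R m ≠ u ∧ R m ≠ v)
    (hstep : ∀ m < c, dist (R m) (R (m + 1)) = D) :
    frameY u v (R 0) * frameY u v (R c) < 0 := by
  have key := neg_one_pow_mul_mul_pos hc.pos fun m hm => by
    obtain ⟨hm₀, hm₀u, hm₀v⟩ := hR m hm.le
    obtain ⟨hm₁, hm₁u, hm₁v⟩ := hR (m + 1) hm
    exact frameY_mul_frameY_neg hX hu hv hm₀ hm₁ huv (hstep m hm) hm₀u hm₀v hm₁u hm₁v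
  rwa [hc.neg_one_pow, neg_one_mul, neg_pos] at key

end Diameter

namespace Fin

open scoped Fin.NatCast

variable {n : ℕ}

lemma val_sub_add_val_sub {i j : Fin n} (hij : i ≠ j) : (j - i).val + (i - j).val = n := by
  rcases lt_or_gt_of_ne hij with h | h
  · rw [coe_sub_iff_le.2 h.le, coe_sub_iff_lt.2 h]; have := lt_def.1 h; omega
  · rw [coe_sub_iff_lt.2 h, coe_sub_iff_le.2 h.le]; have := lt_def.1 h; omega

lemma natCast_ne_natCast [NeZero n] {a b : ℕ} (ha : a < n) (hb : b < n) (hab : a ≠ b) :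
    (a : Fin n) ≠ b := fun h => hab <| by
  simpa [val_natCast, Nat.mod_eq_of_lt ha, Nat.mod_eq_of_lt hb] using congrArg Fin.val h

end Fin

section OddCycle

open Set Function
open scoped Fin.NatCast Fin.CommRing

variable {X : Set ℝ²} {D : ℝ} {n : ℕ} [NeZero n] {P : Fin n → ℝ²}

theorem dist_lt_of_notMem_range_odd_cycle (hX : ∀ p ∈ X, ∀ q ∈ X, dist p q ≤ D)
    (hn : Odd n) (hPX : ∀ i, P i ∈ X) (hP : ∀ i, dist (P i) (P (i + 1)) = D) {x y : ℝ²}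
    (hx : x ∈ X) (hy : y ∈ X) (hxP : x ∉ range P) (hyP : y ∉ range P) : dist x y < D := by
  refine (hX x hx y hy).lt_of_ne fun hxy => ?_
  have hR : ∀ m : ℕ, P m ∈ X ∧ P m ≠ x ∧ P m ≠ y := fun m =>
    ⟨hPX m, fun h => hxP ⟨m, h⟩, fun h => hyP ⟨m, h⟩⟩
  have := frameY_mul_frameY_neg_of_odd_path hX hx hy hxy hn (R := fun m : ℕ => P m)
    (fun m _ => hR m) fun m _ => by simpa using hP m
  simp only [Nat.cast_zero, Fin.natCast_self] at this
  exact (mul_self_nonneg _).not_gt this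

theorem eq_of_dist_eq_of_notMem_range_odd_cycle (hX : ∀ p ∈ X, ∀ q ∈ X, dist p q ≤ D)
    (hn : Odd n) (hPX : ∀ i, P i ∈ X) (hPinj : Injective P)
    (hP : ∀ i, dist (P i) (P (i + 1)) = D) {x : ℝ²} (hx : x ∈ X) (hxP : x ∉ range P)
    {i j : Fin n} (hi : dist x (P i) = D) (hj : dist x (P j) = D) : i = j := by
  by_contra hij
  wlog hodd : Odd (j - i).val generalizing i j
  · refine this hj hi (Ne.symm hij) ?_
    have := Fin.val_sub_add_val_sub hij
    obtain ⟨r, hr⟩ := Nat.not_odd_iff_even.1 hodd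
    obtain ⟨s, hs⟩ := hn
    exact ⟨s - r, by omega⟩
  set c := (j - i).val
  have hjc : i + (c : Fin n) = j := by simp [c]
  have hcn : c + 2 ≤ n := by
    have := (j - i).is_lt
    obtain ⟨r, hr⟩ := hodd
    obtain ⟨s, hs⟩ := hn
    omega
  have hj₁ : j + 1 = i + ((c + 1 : ℕ) : Fin n) := by rw [← hjc]; push_cast; ring
  have hj₂ : j + 1 + 1 = i + ((c + 2 : ℕ) : Fin n) := by rw [← hjc]; push_cast; ring
  rcases hcn.eq_or_lt with hcn | hcn
  · -- `P (j + 1)` is the only vertex off the arc from `P i` to `P j`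
    rw [hcn, Fin.natCast_self, add_zero] at hj₂
    have := eq_of_dist_eq_of_dist_eq hX hx (hPX (j + 1)) (hPX j) (hPX i) hj hi
      (by rw [dist_comm, hP]) (by rw [← hj₂, hP]) (hPinj.ne (Ne.symm hij))
    exact hxP ⟨j + 1, this.symm⟩
  · -- the odd arc `P i, …, P j` avoids the diameter `P (j + 1) P (j + 1 + 1)`
    have hR : ∀ m ≤ c,
        P (i + m) ∈ X ∧ P (i + m) ≠ P (j + 1) ∧ P (i + m) ≠ P (j + 1 + 1) := by
      intro m hm
      have hne : ∀ b, c < b → b < n → P (i + m) ≠ P (i + (b : ℕ)) := fun b hb hbn h =>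
        Fin.natCast_ne_natCast (by omega) hbn (by omega) (add_left_cancel (hPinj h))
      rw [hj₂, hj₁]
      exact ⟨hPX _, hne _ (by omega) (by omega), hne _ (by omega) hcn⟩
    have harc := frameY_mul_frameY_neg_of_odd_path hX (hPX _) (hPX _) (hP _) hodd
      (R := fun m : ℕ => P (i + m)) hR fun m _ => by simpa [add_assoc] using hP (i + m)
    obtain ⟨hPi, hPiu, hPiv⟩ := hR 0 (Nat.zero_le _)
    obtain ⟨hPj, hPju, hPjv⟩ := hR c le_rfl
    simp only [Nat.cast_zero, add_zero, hjc] at harc hPi hPiu hPiv hPj hPju hPjv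
    have hxu : x ≠ P (j + 1) := fun h => hxP ⟨_, h.symm⟩
    have hxv : x ≠ P (j + 1 + 1) := fun h => hxP ⟨_, h.symm⟩
    have hxi := frameY_mul_frameY_neg hX (hPX _) (hPX _) hx hPi (hP _) hi hxu hxv hPiu hPiv
    have hxj := frameY_mul_frameY_neg hX (hPX _) (hPX _) hx hPj (hP _) hj hxu hxv hPju hPjv
    nlinarith [mul_pos_of_neg_of_neg hxi hxj, mul_nonpos_of_nonneg_of_nonpos
      (mul_self_nonneg (frameY (P (j + 1)) (P (j + 1 + 1)) x)) harc.le]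

end OddCycle

theorem stmt_8_general (X : Set (EuclideanSpace ℝ (Fin 2))) (D : ℝ)
    (hD : IsGreatest {d : ℝ | ∃ p ∈ X, ∃ q ∈ X, p ≠ q ∧ dist p q = d} D)
    (k : ℕ) (P : Fin (2 * k + 3) → EuclideanSpace ℝ (Fin 2))
    (hPX : ∀ i, P i ∈ X) (hPinj : Function.Injective P)
    (hPcyc : ∀ i, dist (P i) (P (i + 1)) = D) :
    (∀ x ∈ X, ∀ y ∈ X, x ∉ Set.range P → y ∉ Set.range P → x ≠ y →
      dist x y < D) ∧
    (∀ x ∈ X, x ∉ Set.range P →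
      ∀ i j, dist x (P i) = D → dist x (P j) = D → i = j) := by
  have hX : ∀ p ∈ X, ∀ q ∈ X, dist p q ≤ D := by
    intro p hp q hq
    rcases eq_or_ne p q with rfl | hpq
    · obtain ⟨_, _, _, _, _, hD₀⟩ := hD.1
      exact (dist_self p).trans_le (hD₀ ▸ dist_nonneg)
    · exact hD.2 ⟨p, hp, q, hq, hpq, rfl⟩
  have hn : Odd (2 * k + 3) := ⟨k + 1, by ring⟩
  exact ⟨fun x hx y hy hxP hyP _ =>
      dist_lt_of_notMem_range_odd_cycle hX hn hPX hPcyc hx hy hxP hyP,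
    fun x hx hxP i j hi hj =>
      eq_of_dist_eq_of_notMem_range_odd_cycle hX hn hPX hPinj hPcyc hx hxP hi hj⟩

/-- If the diameter graph of a finite planar point set `X` contains an odd cycle
`P₁, …, P_{2k+1}` (odd length `2k+3`, `k ≥ 0` below), then (a) any two distinct
points of `X` outside the cycle are at distance `< D(X)`, and (b) every point of
`X` outside the cycle is at distance `D(X)` from at most one point of the cycle. -/
theorem stmt_8 (X : Set (EuclideanSpace ℝ (Fin 2))) (hfin : X.Finite)
    (hcard : 2 ≤ X.ncard) (D : ℝ)
    (hD : IsGreatest {d : ℝ | ∃ p ∈ X, ∃ q ∈ X, p ≠ q ∧ dist p q = d} D)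
    (k : ℕ) (P : Fin (2 * k + 3) → EuclideanSpace ℝ (Fin 2))
    (hPX : ∀ i, P i ∈ X) (hPinj : Function.Injective P)
    (hPcyc : ∀ i, dist (P i) (P (i + 1)) = D) :
    (∀ x ∈ X, ∀ y ∈ X, x ∉ Set.range P → y ∉ Set.range P → x ≠ y →
      dist x y < D) ∧
    (∀ x ∈ X, x ∉ Set.range P →
      ∀ i j, dist x (P i) = D → dist x (P j) = D → i = j) :=
  stmt_8_general X D hD k P hPX hPinj hPcyc
end

section
/- Let P₁, P₂, P₃ ∈ ℝ³ with dist(P₁,P₂) = dist(P₂,P₃) = dist(P₃,P₁) = c for some real c > 0, let Π be the affine plane determined by P₁, P₂, P₃, and let R⁺ be one of the two closed half-spaces bounded by Π (containing Π) and R⁻ the complementary open half-space. Define S⁺ = {Q ∈ R⁺ : dist(P_i, Q) ≤ c for i = 1,2,3} and S⁻ = {Q ∈ R⁻ : dist(P_i, Q) ≤ c for i = 1,2,3}. Then: (a) for all Q₁, Q₂ ∈ S⁺ one has dist(Q₁,Q₂) ≤ c, with equality only if Q₁ ∈ {P₁,P₂,P₃} or Q₂ ∈ {P₁,P₂,P₃};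 and (b) for all Q₁, Q₂ ∈ S⁻ one has dist(Q₁,Q₂) < c. -/
/-!
Split `Q₂ - P₁ = u + w` with `u` parallel to the plane `Π` and `w` normal to it (this is where
`dim = 3` enters). The balls of radius `c` about the vertices meet `Π` in a Reuleaux triangle, the
union of the three `60°` sectors of radius `c` centred at the vertices, so after relabelling
`u = l • (P₂ - P₁) + m • (P₃ - P₁)` with `l, m ≥ 0`. When `Q₁, Q₂` lie on the same side of `Π`
and `Q₂` is the one nearer to `Π`, expanding `c ^ 2 - dist Q₁ Q₂ ^ 2 - ‖w‖ ^ 2` writes it as a sum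
of nonnegative terms, which all vanish only if `Q₁ = P₁` or `Q₂` is a vertex. In the open
half-space `w ≠ 0`, whence the strict inequality.
-/

open scoped RealInnerProductSpace

-- `(1 - s - t, s, t)` are barycentric coordinates; within distance `1` of the second and third
-- vertex at most one of them is negative, i.e. the point lies in the sector at some vertex.
theorem barycentric_cases {s t : ℝ} (h₂ : (s - 1) ^ 2 + (s - 1) * t + t ^ 2 ≤ 1)
    (h₃ : s ^ 2 + s * (t - 1) + (t - 1) ^ 2 ≤ 1) :
    (0 ≤ s ∧ 0 ≤ t) ∨ (0 ≤ 1 - s - t ∧ 0 ≤ t) ∨ (0 ≤ 1 - s - t ∧ 0 ≤ s) := by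
  rcases lt_or_ge s 0 with hs | hs
  · have ht : 0 ≤ t := by
      by_contra! ht
      nlinarith [mul_pos_of_neg_of_neg (by linarith : s - 1 < 0) ht]
    exact Or.inr (Or.inl ⟨by nlinarith, ht⟩)
  rcases lt_or_ge t 0 with ht | ht
  · exact Or.inr (Or.inr ⟨by nlinarith, hs⟩)
  · exact Or.inl ⟨hs, ht⟩

section InnerProductSpace

variable {V : Type*} [NormedAddCommGroup V] [InnerProductSpace ℝ V]

theorem norm_smul_add_smul_sq_of_norm_eq {a b : V} {c : ℝ} (ha : ‖a‖ = c) (hb : ‖b‖ = c)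
    (l m : ℝ) : ‖l • a + m • b‖ ^ 2 = (l + m) ^ 2 * c ^ 2 - l * m * ‖a - b‖ ^ 2 := by
  rw [norm_add_sq_real, norm_sub_sq_real, norm_smul, norm_smul, inner_smul_left,
    inner_smul_right, ha, hb, Real.norm_eq_abs, Real.norm_eq_abs, mul_pow, mul_pow, sq_abs, sq_abs]
  simp only [conj_trivial]
  ring

theorem norm_smul_add_smul_add_sq_of_norm_eq {a b w : V} {c : ℝ} (ha : ‖a‖ = c) (hb : ‖b‖ = c)
    (hab : ‖a - b‖ = c) (haw : ⟪a, w⟫ = 0) (hbw : ⟪b, w⟫ = 0) (s t : ℝ) :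
    ‖s • a + t • b + w‖ ^ 2 = (s ^ 2 + s * t + t ^ 2) * c ^ 2 + ‖w‖ ^ 2 := by
  rw [norm_add_sq_real, norm_smul_add_smul_sq_of_norm_eq ha hb, hab, inner_add_left,
    inner_smul_left, inner_smul_left, haw, hbw]
  ring

theorem norm_sq_le_two_mul_inner_of_norm_sub_le {x a : V} (h : ‖x - a‖ ≤ ‖a‖) :
    ‖x‖ ^ 2 ≤ 2 * ⟪x, a⟫ := by
  have := pow_le_pow_left₀ (norm_nonneg _) h 2
  rw [norm_sub_sq_real] at this
  linarith

theorem norm_smul_add_smul_le_of_norm_eq {a b : V} {c l m : ℝ} (ha : ‖a‖ = c) (hb : ‖b‖ = c)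
    (hl : 0 ≤ l) (hm : 0 ≤ m) : ‖l • a + m • b‖ ≤ (l + m) * c := by
  calc ‖l • a + m • b‖ ≤ ‖l • a‖ + ‖m • b‖ := norm_add_le _ _
    _ = (l + m) * c := by
      rw [norm_smul, norm_smul, Real.norm_of_nonneg hl, Real.norm_of_nonneg hm, ha, hb]; ring

-- With `u = l • a + m • b`, every summand on the right is nonnegative as soon as `l, m ≥ 0`,
-- `‖u‖ ≤ c`, `‖x‖, ‖x - a‖, ‖x - b‖ ≤ c` and `‖w‖ ^ 2 ≤ ⟪x, w⟫`.
theorem sector_slack_eq (a b x w : V) (c l m : ℝ) (hw : ⟪l • a + m • b, w⟫ = 0) :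
    c * (c ^ 2 - (‖x - (l • a + m • b + w)‖ ^ 2 + ‖w‖ ^ 2)) =
      (c - ‖l • a + m • b‖) * (c ^ 2 - ‖x‖ ^ 2) + ‖l • a + m • b‖ * c * (c - ‖l • a + m • b‖)
        + ((l + m) * c - ‖l • a + m • b‖) * ‖x‖ ^ 2
        + c * (l * (2 * ⟪x, a⟫ - ‖x‖ ^ 2) + m * (2 * ⟪x, b⟫ - ‖x‖ ^ 2)
          + 2 * (⟪x, w⟫ - ‖w‖ ^ 2)) := by
  rw [norm_sub_sq_real, norm_add_sq_real _ w, hw, inner_add_right, inner_add_right,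
    inner_smul_right, inner_smul_right]
  ring

theorem norm_sub_sq_add_norm_sq_le_of_sector {a b x w : V} {c l m : ℝ} (hc : 0 < c)
    (ha : ‖a‖ = c) (hb : ‖b‖ = c) (hl : 0 ≤ l) (hm : 0 ≤ m)
    (hu : ‖l • a + m • b‖ ≤ c) (hw : ⟪l • a + m • b, w⟫ = 0) (hx : ‖x‖ ≤ c)
    (hxa : ‖x - a‖ ≤ c) (hxb : ‖x - b‖ ≤ c) (hxw : ‖w‖ ^ 2 ≤ ⟪x, w⟫) :
    ‖x - (l • a + m • b + w)‖ ^ 2 + ‖w‖ ^ 2 ≤ c ^ 2 := by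
  have hA := norm_sq_le_two_mul_inner_of_norm_sub_le (hxa.trans_eq ha.symm)
  have hB := norm_sq_le_two_mul_inner_of_norm_sub_le (hxb.trans_eq hb.symm)
  have hr := norm_smul_add_smul_le_of_norm_eq ha hb hl hm
  have hX : ‖x‖ ^ 2 ≤ c ^ 2 := pow_le_pow_left₀ (norm_nonneg _) hx 2
  have hslack := sector_slack_eq a b x w c l m hw
  nlinarith [mul_nonneg (sub_nonneg.2 hu) (sub_nonneg.2 hX),
    mul_nonneg (mul_nonneg (norm_nonneg (l • a + m • b)) hc.le) (sub_nonneg.2 hu),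
    mul_nonneg (sub_nonneg.2 hr) (sq_nonneg ‖x‖), mul_nonneg hl (sub_nonneg.2 hA),
    mul_nonneg hm (sub_nonneg.2 hB)]

theorem sector_equality_cases {a b x w : V} {c l m : ℝ} (hc : 0 < c) (ha : ‖a‖ = c)
    (hb : ‖b‖ = c) (hab : a ≠ b) (hl : 0 ≤ l) (hm : 0 ≤ m) (hu : ‖l • a + m • b‖ ≤ c)
    (hw : ⟪l • a + m • b, w⟫ = 0)
    (hx : ‖x‖ ≤ c) (hxa : ‖x - a‖ ≤ c) (hxb : ‖x - b‖ ≤ c) (hxw : ‖w‖ ^ 2 ≤ ⟪x, w⟫)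
    (heq : ‖x - (l • a + m • b + w)‖ ^ 2 + ‖w‖ ^ 2 = c ^ 2) :
    x = 0 ∨ l • a + m • b = 0 ∨ l • a + m • b = a ∨ l • a + m • b = b := by
  set r := ‖l • a + m • b‖ with hr_def
  have hA := norm_sq_le_two_mul_inner_of_norm_sub_le (hxa.trans_eq ha.symm)
  have hB := norm_sq_le_two_mul_inner_of_norm_sub_le (hxb.trans_eq hb.symm)
  have hr := norm_smul_add_smul_le_of_norm_eq ha hb hl hm
  have hX : ‖x‖ ^ 2 ≤ c ^ 2 := pow_le_pow_left₀ (norm_nonneg _) hx 2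
  have hslack := sector_slack_eq a b x w c l m hw
  rw [heq, sub_self, mul_zero] at hslack
  have h₁ := mul_nonneg (sub_nonneg.2 hu) (sub_nonneg.2 hX)
  have h₂ := mul_nonneg (mul_nonneg (norm_nonneg (l • a + m • b)) hc.le) (sub_nonneg.2 hu)
  have h₃ := mul_nonneg (sub_nonneg.2 hr) (sq_nonneg ‖x‖)
  have h₄ := mul_nonneg hc.le (add_nonneg (add_nonneg (mul_nonneg hl (sub_nonneg.2 hA))
    (mul_nonneg hm (sub_nonneg.2 hB))) (mul_nonneg zero_le_two (sub_nonneg.2 hxw)))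
  have hr_cases : r * c * (c - r) = 0 := by linarith
  rcases mul_eq_zero.1 hr_cases with hrc | hcr
  · exact Or.inr (Or.inl (norm_eq_zero.1 ((mul_eq_zero.1 hrc).resolve_right hc.ne')))
  have hrc : r = c := by linarith
  have hx_cases : ((l + m) * c - r) * ‖x‖ ^ 2 = 0 := by linarith
  rcases mul_eq_zero.1 hx_cases with hlm | hx0
  · have hlm1 : l + m = 1 := by
      rw [hrc] at hlm
      nlinarith
    have hsq := norm_smul_add_smul_sq_of_norm_eq ha hb l m
    rw [← hr_def, hrc, hlm1] at hsq
    have hab' : ‖a - b‖ ^ 2 ≠ 0 := by simpa [sub_eq_zero] using hab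
    rcases mul_eq_zero.1 (show l * m * ‖a - b‖ ^ 2 = 0 by linarith) with h | h
    · rcases mul_eq_zero.1 h with hl0 | hm0
      · right; right; right
        simp [hl0, show m = 1 by linarith]
      · right; right; left
        simp [hm0, show l = 1 by linarith]
    · exact absurd h hab'
  · exact Or.inl (by simpa using hx0)

theorem inner_sub_eq_of_inner_sub_eq_zero {P Q X w : V} (h : ⟪Q - P, w⟫ = 0) :
    ⟪X - Q, w⟫ = ⟪X - P, w⟫ := by
  rw [← sub_sub_sub_cancel_right X Q P, inner_sub_left, h, sub_zero]

theorem dist_sq_add_norm_sq_le_of_mem_sector {P₁ P₂ P₃ Q₁ Q₂ w : V} {c s t : ℝ} (hc : 0 < c)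
    (h12 : dist P₁ P₂ = c) (h13 : dist P₁ P₃ = c) (h23 : P₂ ≠ P₃)
    (hQ₁ : dist P₁ Q₁ ≤ c) (hQ₁₂ : dist P₂ Q₁ ≤ c) (hQ₁₃ : dist P₃ Q₁ ≤ c)
    (hQ₂ : dist P₁ Q₂ ≤ c) (hs : 0 ≤ s) (ht : 0 ≤ t)
    (hdec : Q₂ - P₁ = s • (P₂ - P₁) + t • (P₃ - P₁) + w)
    (hw₂ : ⟪P₂ - P₁, w⟫ = 0) (hw₃ : ⟪P₃ - P₁, w⟫ = 0) (hxw : ‖w‖ ^ 2 ≤ ⟪Q₁ - P₁, w⟫) :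
    dist Q₁ Q₂ ^ 2 + ‖w‖ ^ 2 ≤ c ^ 2 ∧
      (dist Q₁ Q₂ = c → Q₁ = P₁ ∨ Q₂ = P₁ ∨ Q₂ = P₂ ∨ Q₂ = P₃) := by
  have ha : ‖P₂ - P₁‖ = c := by rw [← dist_eq_norm, dist_comm, h12]
  have hb : ‖P₃ - P₁‖ = c := by rw [← dist_eq_norm, dist_comm, h13]
  have hab : P₂ - P₁ ≠ P₃ - P₁ := fun h => h23 (sub_left_injective h)
  have hw : ⟪s • (P₂ - P₁) + t • (P₃ - P₁), w⟫ = 0 := by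
    rw [inner_add_left, inner_smul_left, inner_smul_left, hw₂, hw₃]; simp
  have hu : ‖s • (P₂ - P₁) + t • (P₃ - P₁)‖ ≤ c := by
    have h := (dist_comm Q₂ P₁).trans_le hQ₂
    rw [dist_eq_norm, hdec] at h
    have h' := pow_le_pow_left₀ (norm_nonneg _) h 2
    rw [norm_add_sq_real, hw] at h'
    exact abs_le_of_sq_le_sq' (by nlinarith [sq_nonneg ‖w‖]) hc.le |>.2
  have hx : ‖Q₁ - P₁‖ ≤ c := by rwa [← dist_eq_norm, dist_comm]
  have hxa : ‖Q₁ - P₁ - (P₂ - P₁)‖ ≤ c := by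
    rwa [sub_sub_sub_cancel_right, ← dist_eq_norm, dist_comm]
  have hxb : ‖Q₁ - P₁ - (P₃ - P₁)‖ ≤ c := by
    rwa [sub_sub_sub_cancel_right, ← dist_eq_norm, dist_comm]
  have hdist : dist Q₁ Q₂ = ‖Q₁ - P₁ - (s • (P₂ - P₁) + t • (P₃ - P₁) + w)‖ := by
    rw [← hdec, sub_sub_sub_cancel_right, dist_eq_norm]
  have hbound := norm_sub_sq_add_norm_sq_le_of_sector hc ha hb hs ht hu hw hx hxa hxb hxw
  refine ⟨hdist ▸ hbound, fun hQ => ?_⟩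
  have hw0 : w = 0 := by
    rw [hdist] at hQ
    rw [hQ] at hbound
    exact norm_eq_zero.1 (pow_eq_zero_iff two_ne_zero |>.1 (by linarith [sq_nonneg ‖w‖]))
  rcases sector_equality_cases hc ha hb hab hs ht hu hw hx hxa hxb hxw (by
    rw [← hdist, hQ, hw0, norm_zero]; ring) with h | h | h | h
  · exact Or.inl (sub_eq_zero.1 h)
  all_goals
    rw [h, hw0, add_zero] at hdec
  · exact Or.inr (Or.inl (sub_eq_zero.1 hdec))
  · exact Or.inr (Or.inr (Or.inl (sub_left_injective hdec)))
  · exact Or.inr (Or.inr (Or.inr (sub_left_injective hdec)))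

theorem barycentric_cases_of_dist_le {P₁ P₂ P₃ Q w : V} {c s t : ℝ} (hc : 0 < c)
    (h12 : dist P₁ P₂ = c) (h23 : dist P₂ P₃ = c) (h31 : dist P₃ P₁ = c)
    (hQ₂ : dist P₂ Q ≤ c) (hQ₃ : dist P₃ Q ≤ c)
    (hdec : Q - P₁ = s • (P₂ - P₁) + t • (P₃ - P₁) + w)
    (hw₂ : ⟪P₂ - P₁, w⟫ = 0) (hw₃ : ⟪P₃ - P₁, w⟫ = 0) :
    (0 ≤ s ∧ 0 ≤ t) ∨ (0 ≤ 1 - s - t ∧ 0 ≤ t) ∨ (0 ≤ 1 - s - t ∧ 0 ≤ s) := by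
  have ha : ‖P₂ - P₁‖ = c := by rw [← dist_eq_norm', h12]
  have hb : ‖P₃ - P₁‖ = c := by rw [← dist_eq_norm, h31]
  have hab : ‖P₂ - P₁ - (P₃ - P₁)‖ = c := by rw [sub_sub_sub_cancel_right, ← dist_eq_norm, h23]
  have hsq : ∀ {P : V} {u v : ℝ}, Q - P = u • (P₂ - P₁) + v • (P₃ - P₁) + w →
      dist P Q ^ 2 = (u ^ 2 + u * v + v ^ 2) * c ^ 2 + ‖w‖ ^ 2 := fun h => by
    rw [dist_comm, dist_eq_norm, h, norm_smul_add_smul_add_sq_of_norm_eq ha hb hab hw₂ hw₃]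
  have h₂ := hsq (P := P₂) (u := s - 1) (v := t)
    (by rw [← sub_sub_sub_cancel_right Q P₂ P₁, hdec]; module)
  have h₃ := hsq (P := P₃) (u := s) (v := t - 1)
    (by rw [← sub_sub_sub_cancel_right Q P₃ P₁, hdec]; module)
  have hc2 : 0 < c ^ 2 := pow_pos hc 2
  have hP₂ := pow_le_pow_left₀ dist_nonneg hQ₂ 2
  have hP₃ := pow_le_pow_left₀ dist_nonneg hQ₃ 2
  exact barycentric_cases (by nlinarith) (by nlinarith)

theorem dist_sq_add_norm_sq_le_of_mem_balls {P₁ P₂ P₃ Q₁ Q₂ w : V} {c s t : ℝ} (hc : 0 < c)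
    (h12 : dist P₁ P₂ = c) (h23 : dist P₂ P₃ = c) (h31 : dist P₃ P₁ = c)
    (hQ₁₁ : dist P₁ Q₁ ≤ c) (hQ₁₂ : dist P₂ Q₁ ≤ c) (hQ₁₃ : dist P₃ Q₁ ≤ c)
    (hQ₂₁ : dist P₁ Q₂ ≤ c) (hQ₂₂ : dist P₂ Q₂ ≤ c) (hQ₂₃ : dist P₃ Q₂ ≤ c)
    (hdec : Q₂ - P₁ = s • (P₂ - P₁) + t • (P₃ - P₁) + w)
    (hw₂ : ⟪P₂ - P₁, w⟫ = 0) (hw₃ : ⟪P₃ - P₁, w⟫ = 0) (hxw : ‖w‖ ^ 2 ≤ ⟪Q₁ - P₁, w⟫) :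
    dist Q₁ Q₂ ^ 2 + ‖w‖ ^ 2 ≤ c ^ 2 ∧
      (dist Q₁ Q₂ = c → Q₁ ∈ ({P₁, P₂, P₃} : Set V) ∨ Q₂ ∈ ({P₁, P₂, P₃} : Set V)) := by
  have hne : ∀ {X Y : V}, dist X Y = c → X ≠ Y := fun h => dist_pos.1 (h ▸ hc)
  have hw₁₂ : ⟪P₁ - P₂, w⟫ = 0 := by
    rw [inner_sub_eq_of_inner_sub_eq_zero hw₂, sub_self, inner_zero_left]
  have hw₃₂ : ⟪P₃ - P₂, w⟫ = 0 := by rw [inner_sub_eq_of_inner_sub_eq_zero hw₂, hw₃]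
  have hw₁₃ : ⟪P₁ - P₃, w⟫ = 0 := by
    rw [inner_sub_eq_of_inner_sub_eq_zero hw₃, sub_self, inner_zero_left]
  have hw₂₃ : ⟪P₂ - P₃, w⟫ = 0 := by rw [inner_sub_eq_of_inner_sub_eq_zero hw₃, hw₂]
  have relabel : ∀ {X Y Z : V}, X ∈ ({P₁, P₂, P₃} : Set V) → Y ∈ ({P₁, P₂, P₃} : Set V) →
      Z ∈ ({P₁, P₂, P₃} : Set V) → dist Q₁ Q₂ ^ 2 + ‖w‖ ^ 2 ≤ c ^ 2 ∧
        (dist Q₁ Q₂ = c → Q₁ = X ∨ Q₂ = X ∨ Q₂ = Y ∨ Q₂ = Z) →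
      dist Q₁ Q₂ ^ 2 + ‖w‖ ^ 2 ≤ c ^ 2 ∧
        (dist Q₁ Q₂ = c → Q₁ ∈ ({P₁, P₂, P₃} : Set V) ∨ Q₂ ∈ ({P₁, P₂, P₃} : Set V)) := by
    rintro X Y Z hX hY hZ ⟨hle, heq⟩
    refine ⟨hle, fun h => ?_⟩
    rcases heq h with rfl | rfl | rfl | rfl <;> tauto
  rcases barycentric_cases_of_dist_le hc h12 h23 h31 hQ₂₂ hQ₂₃ hdec hw₂ hw₃ with
    ⟨hs, ht⟩ | ⟨hα, ht⟩ | ⟨hα, hs⟩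
  · refine relabel ?_ ?_ ?_ (dist_sq_add_norm_sq_le_of_mem_sector hc h12
      (by rw [dist_comm, h31]) (hne h23) hQ₁₁ hQ₁₂ hQ₁₃ hQ₂₁ hs ht hdec hw₂ hw₃ hxw) <;> simp
  · refine relabel ?_ ?_ ?_ (dist_sq_add_norm_sq_le_of_mem_sector hc
      (by rw [dist_comm, h12]) h23 (hne (by rw [dist_comm, h31])) hQ₁₂ hQ₁₁ hQ₁₃ hQ₂₂ hα ht
      (by rw [← sub_sub_sub_cancel_right Q₂ P₂ P₁, hdec]; module) hw₁₂ hw₃₂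
      (by rwa [inner_sub_eq_of_inner_sub_eq_zero hw₂])) <;> simp
  · refine relabel ?_ ?_ ?_ (dist_sq_add_norm_sq_le_of_mem_sector hc h31
      (by rw [dist_comm, h23]) (hne h12) hQ₁₃ hQ₁₁ hQ₁₂ hQ₂₃ hα hs
      (by rw [← sub_sub_sub_cancel_right Q₂ P₃ P₁, hdec]; module) hw₁₃ hw₂₃
      (by rwa [inner_sub_eq_of_inner_sub_eq_zero hw₃])) <;> simp

theorem linearIndependent_vsub_of_dist_eq {P₁ P₂ P₃ : V} {c : ℝ} (hc : 0 < c)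
    (h12 : dist P₁ P₂ = c) (h23 : dist P₂ P₃ = c) (h31 : dist P₃ P₁ = c) :
    LinearIndependent ℝ ![P₂ - P₁, P₃ - P₁] := by
  have ha : ‖P₂ - P₁‖ = c := by rw [← dist_eq_norm, dist_comm, h12]
  have hb : ‖P₃ - P₁‖ = c := by rw [← dist_eq_norm, h31]
  have hab : ‖P₂ - P₁ - (P₃ - P₁)‖ = c := by rw [sub_sub_sub_cancel_right, ← dist_eq_norm, h23]
  refine LinearIndependent.pair_iff.2 fun s t h => ?_
  have hsq := norm_smul_add_smul_sq_of_norm_eq ha hb s t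
  rw [h, hab, norm_zero] at hsq
  have hq : s ^ 2 + s * t + t ^ 2 = 0 := by
    have := pow_pos hc 2
    nlinarith
  constructor <;> nlinarith [sq_nonneg (s + t), sq_nonneg s, sq_nonneg t]

end InnerProductSpace

section FiniteDimensional

variable {V : Type*} [NormedAddCommGroup V] [InnerProductSpace ℝ V] [FiniteDimensional ℝ V]

theorem exists_eq_smul_add_smul_add_smul (hV : Module.finrank ℝ V = 3) {a b n : V}
    (hab : LinearIndependent ℝ ![a, b]) (hn : n ≠ 0) (ha : ⟪a, n⟫ = 0) (hb : ⟪b, n⟫ = 0)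
    (v : V) : ∃ s t g : ℝ, v = s • a + t • b + g • n := by
  have hli : LinearIndependent ℝ ![n, a, b] := by
    refine linearIndependent_finCons.2 ⟨hab, fun hmem => hn ?_⟩
    rw [Matrix.range_cons_cons_empty] at hmem
    obtain ⟨s, t, hst⟩ := Submodule.mem_span_pair.1 hmem
    refine (inner_self_eq_zero (𝕜 := ℝ)).1 ?_
    nth_rewrite 1 [← hst]
    rw [inner_add_left, inner_smul_left, inner_smul_left, ha, hb]
    simp
  have hspan := hli.span_eq_top_of_card_eq_finrank' (by simp [hV])
  obtain ⟨f, hf⟩ := (Submodule.mem_span_range_iff_exists_fun ℝ).1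
    (hspan ▸ Submodule.mem_top : v ∈ Submodule.span ℝ (Set.range ![n, a, b]))
  refine ⟨f 1, f 2, f 0, ?_⟩
  rw [← hf, Fin.sum_univ_three]
  simp only [Matrix.cons_val_zero, Matrix.cons_val_one, Matrix.cons_val_two, Matrix.head_cons,
    Matrix.tail_cons]
  abel

theorem dist_sq_add_sq_inner_div_norm_le (hV : Module.finrank ℝ V = 3)
    {P₁ P₂ P₃ Q₁ Q₂ n : V} {c : ℝ} (hc : 0 < c)
    (h12 : dist P₁ P₂ = c) (h23 : dist P₂ P₃ = c) (h31 : dist P₃ P₁ = c)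
    (hn : n ≠ 0) (hn2 : ⟪P₂ - P₁, n⟫ = 0) (hn3 : ⟪P₃ - P₁, n⟫ = 0)
    (hQ₁₁ : dist P₁ Q₁ ≤ c) (hQ₁₂ : dist P₂ Q₁ ≤ c) (hQ₁₃ : dist P₃ Q₁ ≤ c)
    (hQ₂₁ : dist P₁ Q₂ ≤ c) (hQ₂₂ : dist P₂ Q₂ ≤ c) (hQ₂₃ : dist P₃ Q₂ ≤ c)
    (h₂ : 0 ≤ ⟪Q₂ - P₁, n⟫) (hle : ⟪Q₂ - P₁, n⟫ ≤ ⟪Q₁ - P₁, n⟫) :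
    dist Q₁ Q₂ ^ 2 + (⟪Q₂ - P₁, n⟫ / ‖n‖) ^ 2 ≤ c ^ 2 ∧
      (dist Q₁ Q₂ = c → Q₁ ∈ ({P₁, P₂, P₃} : Set V) ∨ Q₂ ∈ ({P₁, P₂, P₃} : Set V)) := by
  obtain ⟨s, t, g, hdec⟩ := exists_eq_smul_add_smul_add_smul hV
    (linearIndependent_vsub_of_dist_eq hc h12 h23 h31) hn hn2 hn3 (Q₂ - P₁)
  have hn0 : 0 < ‖n‖ := norm_pos_iff.2 hn
  have hg : ⟪Q₂ - P₁, n⟫ = g * ‖n‖ ^ 2 := by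
    rw [hdec, inner_add_left, inner_add_left, inner_smul_left, inner_smul_left, inner_smul_left,
      hn2, hn3, real_inner_self_eq_norm_sq]
    simp
  have hg0 : 0 ≤ g := nonneg_of_mul_nonneg_left (hg ▸ h₂) (pow_pos hn0 2)
  have hw : ‖g • n‖ ^ 2 = (⟪Q₂ - P₁, n⟫ / ‖n‖) ^ 2 := by
    rw [hg, norm_smul, Real.norm_eq_abs, mul_pow, sq_abs]
    field_simp
  rw [← hw]
  refine dist_sq_add_norm_sq_le_of_mem_balls hc h12 h23 h31 hQ₁₁ hQ₁₂ hQ₁₃ hQ₂₁ hQ₂₂ hQ₂₃ hdec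
    (by rw [inner_smul_right, hn2, mul_zero]) (by rw [inner_smul_right, hn3, mul_zero]) ?_
  rw [inner_smul_right, norm_smul, Real.norm_eq_abs, mul_pow, sq_abs]
  calc g ^ 2 * ‖n‖ ^ 2 = g * (g * ‖n‖ ^ 2) := by ring
    _ ≤ g * ⟪Q₁ - P₁, n⟫ := mul_le_mul_of_nonneg_left (hg ▸ hle) hg0

theorem dist_le_and_mem_of_dist_eq_of_inner_nonneg (hV : Module.finrank ℝ V = 3)
    {P₁ P₂ P₃ Q₁ Q₂ n : V} {c : ℝ} (hc : 0 < c)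
    (h12 : dist P₁ P₂ = c) (h23 : dist P₂ P₃ = c) (h31 : dist P₃ P₁ = c)
    (hn : n ≠ 0) (hn2 : ⟪P₂ - P₁, n⟫ = 0) (hn3 : ⟪P₃ - P₁, n⟫ = 0)
    (hQ₁₁ : dist P₁ Q₁ ≤ c) (hQ₁₂ : dist P₂ Q₁ ≤ c) (hQ₁₃ : dist P₃ Q₁ ≤ c)
    (hQ₂₁ : dist P₁ Q₂ ≤ c) (hQ₂₂ : dist P₂ Q₂ ≤ c) (hQ₂₃ : dist P₃ Q₂ ≤ c)
    (h₁ : 0 ≤ ⟪Q₁ - P₁, n⟫) (h₂ : 0 ≤ ⟪Q₂ - P₁, n⟫) :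
    dist Q₁ Q₂ ≤ c ∧
      (dist Q₁ Q₂ = c → Q₁ ∈ ({P₁, P₂, P₃} : Set V) ∨ Q₂ ∈ ({P₁, P₂, P₃} : Set V)) := by
  have hsq : ∀ {X Y : V}, dist X Y ^ 2 + (⟪Y - P₁, n⟫ / ‖n‖) ^ 2 ≤ c ^ 2 → dist X Y ≤ c :=
    fun h => (pow_le_pow_iff_left₀ dist_nonneg hc.le two_ne_zero).1
      (le_of_add_le_of_nonneg_left h (sq_nonneg _))
  rcases le_total ⟪Q₂ - P₁, n⟫ ⟪Q₁ - P₁, n⟫ with h | h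
  · obtain ⟨hle, heq⟩ := dist_sq_add_sq_inner_div_norm_le hV hc h12 h23 h31 hn hn2 hn3
      hQ₁₁ hQ₁₂ hQ₁₃ hQ₂₁ hQ₂₂ hQ₂₃ h₂ h
    exact ⟨hsq hle, heq⟩
  · obtain ⟨hle, heq⟩ := dist_sq_add_sq_inner_div_norm_le hV hc h12 h23 h31 hn hn2 hn3
      hQ₂₁ hQ₂₂ hQ₂₃ hQ₁₁ hQ₁₂ hQ₁₃ h₁ h
    rw [dist_comm]
    exact ⟨hsq hle, fun hQ => (heq hQ).symm⟩

theorem dist_lt_of_inner_pos (hV : Module.finrank ℝ V = 3)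
    {P₁ P₂ P₃ Q₁ Q₂ n : V} {c : ℝ} (hc : 0 < c)
    (h12 : dist P₁ P₂ = c) (h23 : dist P₂ P₃ = c) (h31 : dist P₃ P₁ = c)
    (hn : n ≠ 0) (hn2 : ⟪P₂ - P₁, n⟫ = 0) (hn3 : ⟪P₃ - P₁, n⟫ = 0)
    (hQ₁₁ : dist P₁ Q₁ ≤ c) (hQ₁₂ : dist P₂ Q₁ ≤ c) (hQ₁₃ : dist P₃ Q₁ ≤ c)
    (hQ₂₁ : dist P₁ Q₂ ≤ c) (hQ₂₂ : dist P₂ Q₂ ≤ c) (hQ₂₃ : dist P₃ Q₂ ≤ c)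
    (h₁ : 0 < ⟪Q₁ - P₁, n⟫) (h₂ : 0 < ⟪Q₂ - P₁, n⟫) :
    dist Q₁ Q₂ < c := by
  have hsq : ∀ {X Y : V}, 0 < ⟪Y - P₁, n⟫ →
      dist X Y ^ 2 + (⟪Y - P₁, n⟫ / ‖n‖) ^ 2 ≤ c ^ 2 → dist X Y < c := fun hY h => by
    have : 0 < (⟪_ - P₁, n⟫ / ‖n‖) ^ 2 := pow_pos (div_pos hY (norm_pos_iff.2 hn)) 2
    exact (pow_lt_pow_iff_left₀ dist_nonneg hc.le two_ne_zero).1 (by linarith)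
  rcases le_total ⟪Q₂ - P₁, n⟫ ⟪Q₁ - P₁, n⟫ with h | h
  · exact hsq h₂ (dist_sq_add_sq_inner_div_norm_le hV hc h12 h23 h31 hn hn2 hn3
      hQ₁₁ hQ₁₂ hQ₁₃ hQ₂₁ hQ₂₂ hQ₂₃ h₂.le h).1
  · rw [dist_comm]
    exact hsq h₁ (dist_sq_add_sq_inner_div_norm_le hV hc h12 h23 h31 hn hn2 hn3
      hQ₂₁ hQ₂₂ hQ₂₃ hQ₁₁ hQ₁₂ hQ₁₃ h₁.le h).1

end FiniteDimensional

/-- Let `P₁ P₂ P₃` be an equilateral triangle of side `c > 0` in `ℝ³`, and let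
`n` be a nonzero normal vector to the plane `Π` through `P₁, P₂, P₃`.  The closed
half-space `R⁺ = {Q : ⟪Q - P₁, n⟫ ≥ 0}` contains `Π`, and `R⁻ = {Q : ⟪Q - P₁, n⟫ < 0}`
is the complementary open half-space.  With
`S⁺ = {Q ∈ R⁺ : dist Pᵢ Q ≤ c, i = 1,2,3}` and `S⁻ = {Q ∈ R⁻ : dist Pᵢ Q ≤ c, i = 1,2,3}`:
(a) any `Q₁, Q₂ ∈ S⁺` satisfy `dist Q₁ Q₂ ≤ c`, with equality only if `Q₁` or `Q₂`
is one of the `Pᵢ`; (b) any `Q₁, Q₂ ∈ S⁻` satisfy `dist Q₁ Q₂ < c`. -/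
theorem stmt_10 (P₁ P₂ P₃ : EuclideanSpace ℝ (Fin 3)) (c : ℝ) (hc : 0 < c)
    (h12 : dist P₁ P₂ = c) (h23 : dist P₂ P₃ = c) (h31 : dist P₃ P₁ = c)
    (n : EuclideanSpace ℝ (Fin 3)) (hn : n ≠ 0)
    (hn2 : ⟪P₂ - P₁, n⟫ = 0) (hn3 : ⟪P₃ - P₁, n⟫ = 0) :
    (∀ Q₁ Q₂ : EuclideanSpace ℝ (Fin 3),
      0 ≤ ⟪Q₁ - P₁, n⟫ → dist P₁ Q₁ ≤ c → dist P₂ Q₁ ≤ c → dist P₃ Q₁ ≤ c →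
      0 ≤ ⟪Q₂ - P₁, n⟫ → dist P₁ Q₂ ≤ c → dist P₂ Q₂ ≤ c → dist P₃ Q₂ ≤ c →
      dist Q₁ Q₂ ≤ c ∧ (dist Q₁ Q₂ = c →
        Q₁ ∈ ({P₁, P₂, P₃} : Set (EuclideanSpace ℝ (Fin 3))) ∨
        Q₂ ∈ ({P₁, P₂, P₃} : Set (EuclideanSpace ℝ (Fin 3))))) ∧
    (∀ Q₁ Q₂ : EuclideanSpace ℝ (Fin 3),
      ⟪Q₁ - P₁, n⟫ < 0 → dist P₁ Q₁ ≤ c → dist P₂ Q₁ ≤ c → dist P₃ Q₁ ≤ c →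
      ⟪Q₂ - P₁, n⟫ < 0 → dist P₁ Q₂ ≤ c → dist P₂ Q₂ ≤ c → dist P₃ Q₂ ≤ c →
      dist Q₁ Q₂ < c) := by
  have hV : Module.finrank ℝ (EuclideanSpace ℝ (Fin 3)) = 3 := finrank_euclideanSpace_fin
  refine ⟨fun Q₁ Q₂ h₁ hQ₁₁ hQ₁₂ hQ₁₃ h₂ hQ₂₁ hQ₂₂ hQ₂₃ =>
    dist_le_and_mem_of_dist_eq_of_inner_nonneg hV hc h12 h23 h31 hn hn2 hn3
      hQ₁₁ hQ₁₂ hQ₁₃ hQ₂₁ hQ₂₂ hQ₂₃ h₁ h₂,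
    fun Q₁ Q₂ h₁ hQ₁₁ hQ₁₂ hQ₁₃ h₂ hQ₂₁ hQ₂₂ hQ₂₃ => ?_⟩
  refine dist_lt_of_inner_pos hV hc h12 h23 h31 (neg_ne_zero.2 hn)
    (by rw [inner_neg_right, hn2, neg_zero]) (by rw [inner_neg_right, hn3, neg_zero])
    hQ₁₁ hQ₁₂ hQ₁₃ hQ₂₁ hQ₂₂ hQ₂₃ ?_ ?_ <;> rw [inner_neg_right] <;> linarith
end

section
/- Let G be a simple graph on 12 vertices that is triangle-free (contains no K₃) and whose independence number satisfies α(G) < 5. Then every vertex v of G has degree 3 or 4. -/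
/-!
In a triangle-free graph the neighbourhood of a vertex `v` is independent, and an independent set
among the non-neighbours of `v` stays independent after adding `v`. So `deg v ≤ α` and the
non-neighbours of `v` span a triangle-free graph with independence number `< α`. This gives
`R(3, k + 1) ≤ R(3, k) + k + 1`, so a triangle-free graph with `α ≤ 2` has at most 5 vertices. With
`α ≤ 3` it has at most 8: on 9 vertices every degree would be exactly 3, which is impossible since
the number of odd-degree vertices is even. Finally, if `α ≤ 4` on 12 vertices, then `deg v ≤ 4` and
the `11 - deg v` non-neighbours of `v` number at most 8.
-/

open Finset

namespace SimpleGraph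

universe u

variable {V : Type u} {G : SimpleGraph V}

theorem CliqueFree.degree_le_indepNum [Fintype V] [DecidableRel G.Adj] (h : G.CliqueFree 3)
    (v : V) : G.degree v ≤ G.indepNum := by
  rw [← card_neighborFinset_eq_degree]
  exact IsIndepSet.card_le_indepNum (by simpa using G.isIndepSet_neighborSet_of_triangleFree h v)

/- `Gᶜ.neighborSet v` is the set of vertices other than `v` that are not adjacent to `v`. -/
theorem indepNum_induce_compl_neighborSet_lt [Finite V] (v : V) :
    (G.induce (Gᶜ.neighborSet v)).indepNum < G.indepNum := by
  classical
  obtain ⟨s, hs⟩ := (G.induce (Gᶜ.neighborSet v)).exists_isNIndepSet_indepNum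
  set t := s.map (Function.Embedding.subtype _)
  have hvt : v ∉ t := by simp [t]
  have ht : G.IsIndepSet (insert v t : Finset V) := by
    rw [coe_insert]
    refine Set.Pairwise.insert ?_ fun w hw _ => ?_
    · rw [coe_map]
      exact Subtype.val_injective.injOn.pairwise_image.mpr hs.isIndepSet
    · obtain ⟨w, -, rfl⟩ := mem_map.mp hw
      have hvw := ((compl_adj G v w).mp w.2).2
      exact ⟨hvw, fun h => hvw h.symm⟩
  have := ht.card_le_indepNum
  rwa [card_insert_of_notMem hvt, card_map, hs.card_eq] at this

theorem card_le_degree_add_of_cliqueFree_three [Fintype V] [DecidableRel G.Adj] {k m : ℕ}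
    (hR : ∀ (W : Type u) [Fintype W] (H : SimpleGraph W),
      H.CliqueFree 3 → H.indepNum ≤ k → Fintype.card W ≤ m)
    (h3 : G.CliqueFree 3) (hα : G.indepNum ≤ k + 1) (v : V) :
    Fintype.card V ≤ G.degree v + m + 1 := by
  classical
  have hfree : (G.induce (Gᶜ.neighborSet v)).CliqueFree 3 :=
    h3.comap (Copy.induce G _).isContained
  have hnon := hR _ _ hfree (by have := G.indepNum_induce_compl_neighborSet_lt v; omega)
  rw [card_neighborSet_eq_degree, degree_compl] at hnon
  omega

theorem two_mul_card_le_of_cliqueFree_three_of_indepNum_le [Fintype V] (h3 : G.CliqueFree 3)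
    {k : ℕ} (hα : G.indepNum ≤ k) : 2 * Fintype.card V ≤ k * (k + 3) := by
  classical
  induction k generalizing V with
  | zero =>
    rcases isEmpty_or_nonempty V with _ | ⟨⟨v⟩⟩
    · simp
    · have := IsIndepSet.card_le_indepNum (G := G) (t := {v}) (by simp)
      rw [card_singleton] at this
      omega
  | succ k ih =>
    rcases isEmpty_or_nonempty V with _ | ⟨⟨v⟩⟩
    · simp
    · have hR : ∀ (W : Type u) [Fintype W] (H : SimpleGraph W),
          H.CliqueFree 3 → H.indepNum ≤ k → Fintype.card W ≤ k * (k + 3) / 2 :=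
        fun _ _ _ h3 hα => by have := ih h3 hα; omega
      have := card_le_degree_add_of_cliqueFree_three hR h3 hα v
      have := h3.degree_le_indepNum v
      have : (k + 1) * (k + 1 + 3) = k * (k + 3) + 2 * k + 4 := by ring
      omega

theorem card_le_eight_of_cliqueFree_three_of_indepNum_le_three [Fintype V]
    (h3 : G.CliqueFree 3) (hα : G.indepNum ≤ 3) : Fintype.card V ≤ 8 := by
  classical
  by_contra! hcard
  have hR : ∀ (W : Type u) [Fintype W] (H : SimpleGraph W),
      H.CliqueFree 3 → H.indepNum ≤ 2 → Fintype.card W ≤ 5 :=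
    fun _ _ _ h3 hα => by
      have := two_mul_card_le_of_cliqueFree_three_of_indepNum_le h3 hα
      omega
  have hdeg : ∀ v, G.degree v = 3 ∧ Fintype.card V = 9 := fun v => by
    have := card_le_degree_add_of_cliqueFree_three hR h3 hα v
    have := h3.degree_le_indepNum v
    omega
  obtain ⟨v⟩ : Nonempty V := Fintype.card_pos_iff.mp (by omega)
  have := G.sum_degrees_eq_twice_card_edges
  rw [sum_congr rfl fun v _ => (hdeg v).1, sum_const, card_univ, (hdeg v).2, smul_eq_mul] at this
  omega

end SimpleGraph

open SimpleGraph in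
theorem stmt_12_general {V : Type*} [Fintype V]
    (G : SimpleGraph V) [DecidableRel G.Adj]
    (hV : Fintype.card V = 12) (hfree : G.CliqueFree 3)
    (hindep : ∀ s : Finset V, (∀ v ∈ s, ∀ w ∈ s, ¬ G.Adj v w) → s.card ≤ 4) :
    ∀ v : V, G.degree v = 3 ∨ G.degree v = 4 := by
  have hα : G.indepNum ≤ 4 := by
    obtain ⟨s, hs⟩ := G.exists_isNIndepSet_indepNum
    rw [← hs.card_eq]
    refine hindep s fun v hv w hw hvw => hs.isIndepSet hv hw ?_ hvw
    rintro rfl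
    exact G.irrefl hvw
  have hR : ∀ (W : Type _) [Fintype W] (H : SimpleGraph W),
      H.CliqueFree 3 → H.indepNum ≤ 3 → Fintype.card W ≤ 8 :=
    fun _ _ _ h3 hα => card_le_eight_of_cliqueFree_three_of_indepNum_le_three h3 hα
  intro v
  have := card_le_degree_add_of_cliqueFree_three hR hfree hα v
  have := hfree.degree_le_indepNum v
  omega

/-- In a triangle-free simple graph on 12 vertices whose independence number is
less than 5 (every independent set has at most 4 vertices), every vertex has
degree 3 or 4. -/
theorem stmt_12 {V : Type*} [Fintype V] [DecidableEq V]
    (G : SimpleGraph V) [DecidableRel G.Adj]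
    (hV : Fintype.card V = 12) (hfree : G.CliqueFree 3)
    (hindep : ∀ s : Finset V, (∀ v ∈ s, ∀ w ∈ s, ¬ G.Adj v w) → s.card ≤ 4) :
    ∀ v : V, G.degree v = 3 ∨ G.degree v = 4 :=
  stmt_12_general G hV hfree hindep
end

section
/- Let G be a simple graph on 12 vertices that is triangle-free (contains no K₃) and whose independence number satisfies α(G) < 5. Then G has a vertex of degree 4. -/
/-!
Neighbourhoods in a triangle-free graph are independent, so `α(G) ≤ 4` bounds every degree by 4.
A vertex of degree at most 2 would have 9 non-neighbours, which contain an independent 4-set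
since `R(3,4) = 9`; so if no degree is 4, the graph is cubic. In a cubic graph the 8
non-neighbours of a vertex `v` span exactly 9 edges (24 edge-ends, minus the 6 edges to the
neighbours of `v`). But a triangle-free graph on 8 vertices without independent 4-sets has at
least 10 edges: its degrees are 2 or 3; for `u` of degree 2 with neighbours `p, q` the other
5 vertices form a 5-cycle, and if `p, q` had at most 2 neighbours on it, two non-adjacent
vertices among the remaining 3 would extend `{p, q}` to an independent 4-set.
-/

open Finset

namespace SimpleGraph

variable {V : Type*} {G : SimpleGraph V} {T : Finset V} {n : ℕ}

lemma IndepSetFreeOn.card_lt (h : G.IndepSetFreeOn T n) {s : Finset V} (hsT : s ⊆ T)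
    (hs : G.IsIndepSet (s : Set V)) : #s < n := by
  by_contra! hn
  obtain ⟨t, hts, rfl⟩ := exists_subset_card_eq hn
  exact h (coe_subset.2 (hts.trans hsT)) ⟨hs.mono (coe_subset.2 hts), rfl⟩

lemma IndepSetFreeOn.card_eq_zero (h : G.IndepSetFreeOn T 1) : #T = 0 := by
  by_contra hT
  obtain ⟨v, hv⟩ := card_pos.1 (Nat.pos_of_ne_zero hT)
  simpa using h.card_lt (singleton_subset_iff.2 hv) (by simp)

lemma IndepSetFreeOn.of_isIndepSet_union [DecidableEq V] {A Q : Finset V}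
    (h : G.IndepSetFreeOn T (n + #A)) (hAT : A ⊆ T) (hA : G.IsIndepSet (A : Set V))
    (hQT : Q ⊆ T) (hAQ : Disjoint A Q)
    (hnadj : ∀ a ∈ A, ∀ w ∈ Q, ¬G.Adj a w) : G.IndepSetFreeOn Q n := by
  rintro s hsQ' ⟨hs, rfl⟩
  have hsQ : s ⊆ Q := coe_subset.1 hsQ'
  refine h (t := A ∪ s) (coe_subset.2 (union_subset hAT (hsQ.trans hQT))) ⟨?_, ?_⟩
  · rw [coe_union]
    exact Set.pairwise_union.2
      ⟨hA, hs, fun a ha w hw _ ↦ ⟨hnadj a ha w (hsQ hw), fun h ↦ hnadj a ha w (hsQ hw) h.symm⟩⟩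
  · rw [card_union_of_disjoint (hAQ.mono_right hsQ), add_comm]

variable [DecidableRel G.Adj]

lemma sum_card_filter_adj_comm (A B : Finset V) :
    ∑ a ∈ A, #(B.filter (G.Adj a)) = ∑ b ∈ B, #(A.filter (G.Adj b)) := by
  refine (sum_card_bipartiteAbove_eq_sum_card_bipartiteBelow G.Adj).trans (sum_congr rfl ?_)
  intro b _
  simp only [bipartiteBelow, G.adj_comm]

lemma isIndepSet_filter_adj_of_triangleFree (hG : G.CliqueFree 3) (T : Finset V) (v : V) :
    G.IsIndepSet (T.filter (G.Adj v) : Set V) :=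
  (G.isIndepSet_neighborSet_of_triangleFree hG v).mono fun _ hw ↦ (mem_filter.1 hw).2

lemma IndepSetFreeOn.card_filter_adj_lt (hG : G.CliqueFree 3) (h : G.IndepSetFreeOn T n)
    (v : V) : #(T.filter (G.Adj v)) < n :=
  h.card_lt (filter_subset _ _) (isIndepSet_filter_adj_of_triangleFree hG T v)

lemma IndepSetFree.degree_lt [Fintype V] (hG : G.CliqueFree 3) (h : G.IndepSetFree n) (v : V) :
    G.degree v < n := by
  rw [← card_neighborFinset_eq_degree, neighborFinset_eq_filter]
  exact IndepSetFreeOn.card_filter_adj_lt hG (fun t _ ↦ h t) v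

variable [DecidableEq V] {u v x : V} {m : ℕ}

variable (G) in
def nonNeighborsIn (T : Finset V) (v : V) : Finset V := {w ∈ T.erase v | ¬G.Adj v w}

lemma mem_nonNeighborsIn {w : V} : w ∈ G.nonNeighborsIn T v ↔ w ∈ T ∧ w ≠ v ∧ ¬G.Adj v w := by
  simp only [nonNeighborsIn, mem_filter, mem_erase]
  tauto

lemma nonNeighborsIn_subset : G.nonNeighborsIn T v ⊆ T :=
  filter_subset _ _ |>.trans (erase_subset _ _)

lemma sum_eq_add_sum_filter_adj_add_sum_nonNeighborsIn {M : Type*} [AddCommMonoid M]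
    (hv : v ∈ T) (f : V → M) :
    ∑ x ∈ T, f x = f v + ∑ x ∈ T.filter (G.Adj v), f x + ∑ x ∈ G.nonNeighborsIn T v, f x := by
  rw [← add_sum_erase T f hv, ← sum_filter_add_sum_filter_not (T.erase v) (G.Adj v),
    filter_erase, erase_eq_of_notMem (by simp), add_assoc]
  rfl

lemma card_filter_adj_add_card_nonNeighborsIn (hv : v ∈ T) :
    #(T.filter (G.Adj v)) + #(G.nonNeighborsIn T v) + 1 = #T := by
  have := sum_eq_add_sum_filter_adj_add_sum_nonNeighborsIn (G := G) hv fun _ ↦ 1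
  simp only [← card_eq_sum_ones] at this
  omega

lemma card_filter_adj_eq_ite_add_add (hv : v ∈ T) (x : V) :
    #(T.filter (G.Adj x)) = (if G.Adj x v then 1 else 0) +
      #((T.filter (G.Adj v)).filter (G.Adj x)) + #((G.nonNeighborsIn T v).filter (G.Adj x)) := by
  simp only [card_filter]
  exact sum_eq_add_sum_filter_adj_add_sum_nonNeighborsIn hv _

lemma card_filter_adj_eq_one_add_of_triangleFree (hG : G.CliqueFree 3) (hu : u ∈ T)
    (hx : x ∈ T.filter (G.Adj u)) :
    #(T.filter (G.Adj x)) = 1 + #((G.nonNeighborsIn T u).filter (G.Adj x)) := by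
  have hxu : G.Adj x u := (mem_filter.1 hx).2.symm
  have : (T.filter (G.Adj u)).filter (G.Adj x) = ∅ := filter_eq_empty_iff.2 fun y hy hxy ↦
    isIndepSet_filter_adj_of_triangleFree hG T u (mem_coe.2 hx) (mem_coe.2 hy) hxy.ne hxy
  rw [card_filter_adj_eq_ite_add_add hu, if_pos hxu, this, card_empty, add_zero]

lemma IndepSetFreeOn.nonNeighborsIn (h : G.IndepSetFreeOn T (n + 1)) (hv : v ∈ T) :
    G.IndepSetFreeOn (G.nonNeighborsIn T v) n :=
  IndepSetFreeOn.of_isIndepSet_union (A := {v}) h (singleton_subset_iff.2 hv) (by simp)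
    nonNeighborsIn_subset (by simp [mem_nonNeighborsIn])
    (by simp only [mem_singleton, forall_eq, mem_nonNeighborsIn]; tauto)

lemma IndepSetFreeOn.card_le_card_filter_adj_add (h : G.IndepSetFreeOn T (n + 1)) (hv : v ∈ T)
    (hm : ∀ S : Finset V, G.IndepSetFreeOn S n → #S ≤ m) :
    #T ≤ #(T.filter (G.Adj v)) + m + 1 := by
  have := card_filter_adj_add_card_nonNeighborsIn (G := G) hv
  have := hm _ (h.nonNeighborsIn hv)
  omega

lemma IndepSetFreeOn.card_le_add (hG : G.CliqueFree 3) (h : G.IndepSetFreeOn T (n + 1))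
    (hm : ∀ S : Finset V, G.IndepSetFreeOn S n → #S ≤ m) : #T ≤ n + m + 1 := by
  obtain rfl | ⟨v, hv⟩ := T.eq_empty_or_nonempty
  · simp
  have := h.card_le_card_filter_adj_add hv hm
  have := h.card_filter_adj_lt hG v
  omega

lemma IndepSetFreeOn.card_le_two (hG : G.CliqueFree 3) (h : G.IndepSetFreeOn T 2) : #T ≤ 2 :=
  h.card_le_add hG fun _ hS ↦ hS.card_eq_zero.le

lemma IndepSetFreeOn.card_le_five (hG : G.CliqueFree 3) (h : G.IndepSetFreeOn T 3) : #T ≤ 5 :=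
  h.card_le_add hG fun _ hS ↦ hS.card_le_two hG

lemma card_le_card_filter_forall_not_adj_add_sum (P A : Finset V) :
    #P ≤ #(P.filter fun w ↦ ∀ a ∈ A, ¬G.Adj a w) + ∑ a ∈ A, #(P.filter (G.Adj a)) := by
  calc #P
      ≤ #((P.filter fun w ↦ ∀ a ∈ A, ¬G.Adj a w) ∪ A.biUnion fun a ↦ P.filter (G.Adj a)) := by
        refine card_le_card fun w hw ↦ ?_
        by_cases h : ∀ a ∈ A, ¬G.Adj a w
        · exact mem_union_left _ (mem_filter.2 ⟨hw, h⟩)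
        · push Not at h
          obtain ⟨a, ha, haw⟩ := h
          exact mem_union_right _ (mem_biUnion.2 ⟨a, ha, mem_filter.2 ⟨hw, haw⟩⟩)
    _ ≤ _ := (card_union_le _ _).trans (Nat.add_le_add_left card_biUnion_le _)

lemma sum_card_filter_adj_eq_of_triangleFree (hG : G.CliqueFree 3) (hu : u ∈ T) :
    ∑ x ∈ T, #(T.filter (G.Adj x)) = 2 * #(T.filter (G.Adj u)) +
      2 * ∑ x ∈ T.filter (G.Adj u), #((G.nonNeighborsIn T u).filter (G.Adj x)) +
      ∑ w ∈ G.nonNeighborsIn T u, #((G.nonNeighborsIn T u).filter (G.Adj w)) := by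
  set N := T.filter (G.Adj u)
  set P := G.nonNeighborsIn T u
  have hN : ∀ x ∈ N, #(T.filter (G.Adj x)) = 1 + #(P.filter (G.Adj x)) :=
    fun x hx ↦ card_filter_adj_eq_one_add_of_triangleFree hG hu hx
  have hP : ∀ w ∈ P, #(T.filter (G.Adj w)) = #(N.filter (G.Adj w)) + #(P.filter (G.Adj w)) :=
    fun w hw ↦ by
      rw [card_filter_adj_eq_ite_add_add hu,
        if_neg fun h ↦ (mem_nonNeighborsIn.1 hw).2.2 h.symm, zero_add]
  rw [sum_eq_add_sum_filter_adj_add_sum_nonNeighborsIn (G := G) hu, sum_congr rfl hN,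
    sum_congr rfl hP, sum_add_distrib, sum_add_distrib, ← sum_card_filter_adj_comm (G := G) N P,
    sum_const, smul_eq_mul, mul_one]
  ring

lemma IndepSetFreeOn.twenty_le_sum_card_filter_adj (hG : G.CliqueFree 3)
    (h : G.IndepSetFreeOn T 4) (hT : #T = 8) : 20 ≤ ∑ x ∈ T, #(T.filter (G.Adj x)) := by
  have hdeg : ∀ x ∈ T, 2 ≤ #(T.filter (G.Adj x)) := fun x hx ↦ by
    have := h.card_le_card_filter_adj_add hx fun _ hS ↦ hS.card_le_five hG
    omega
  by_cases h3 : ∀ x ∈ T, 3 ≤ #(T.filter (G.Adj x))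
  · calc 20 ≤ ∑ _ ∈ T, 3 := by simp [hT]
      _ ≤ _ := sum_le_sum h3
  push Not at h3
  obtain ⟨u, hu, hu3⟩ := h3
  set N := T.filter (G.Adj u)
  set P := G.nonNeighborsIn T u
  have hNP1 : #N + #P + 1 = #T := card_filter_adj_add_card_nonNeighborsIn hu
  have hN : #N = 2 := by have : 2 ≤ #N := hdeg u hu; omega
  have hP : #P = 5 := by omega
  have hPfree : G.IndepSetFreeOn P 3 := h.nonNeighborsIn hu
  have hPdeg : ∀ w ∈ P, #(P.filter (G.Adj w)) = 2 := fun w hw ↦ by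
    have := hPfree.card_filter_adj_lt hG w
    have := hPfree.card_le_card_filter_adj_add hw fun _ hS ↦ hS.card_le_two hG
    omega
  -- otherwise three vertices of `P` miss both neighbours of `u`, and two of them complete `N`
  -- to an independent 4-set
  have hNP : 3 ≤ ∑ x ∈ N, #(P.filter (G.Adj x)) := by
    have hQ : G.IndepSetFreeOn (P.filter fun w ↦ ∀ a ∈ N, ¬G.Adj a w) 2 := by
      refine IndepSetFreeOn.of_isIndepSet_union (by rwa [hN]) (filter_subset _ _)
        (isIndepSet_filter_adj_of_triangleFree hG T u)
        ((filter_subset _ _).trans nonNeighborsIn_subset) ?_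
        fun a ha w hw ↦ (mem_filter.1 hw).2 a ha
      refine Finset.disjoint_left.2 fun x hx hxP ↦ ?_
      exact (mem_nonNeighborsIn.1 (mem_filter.1 hxP).1).2.2 (mem_filter.1 hx).2
    have := hQ.card_le_two hG
    have := card_le_card_filter_forall_not_adj_add_sum (G := G) P N
    omega
  have hsum : ∑ x ∈ T, #(T.filter (G.Adj x)) =
      2 * #N + 2 * ∑ x ∈ N, #(P.filter (G.Adj x)) + ∑ w ∈ P, #(P.filter (G.Adj w)) :=
    sum_card_filter_adj_eq_of_triangleFree hG hu
  rw [hsum, sum_congr rfl hPdeg, sum_const, smul_eq_mul, hP, hN]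
  omega

variable [Fintype V]

lemma even_sum_card_filter_adj (T : Finset V) : Even (∑ x ∈ T, #(T.filter (G.Adj x))) := by
  let H : SimpleGraph V :=
    { Adj x y := G.Adj x y ∧ x ∈ T ∧ y ∈ T
      symm := ⟨fun _ _ h ↦ ⟨h.1.symm, h.2.2, h.2.1⟩⟩
      loopless := ⟨fun _ h ↦ h.1.ne rfl⟩ }
  have hdeg : ∀ x, H.degree x = if x ∈ T then #(T.filter (G.Adj x)) else 0 := by
    intro x
    rw [← card_neighborFinset_eq_degree]
    split_ifs with hx
    · congr 1
      ext y
      simp [H, hx, and_comm]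
    · rw [card_eq_zero, eq_empty_iff_forall_notMem]
      simp [H, hx]
  have := H.sum_degrees_eq_twice_card_edges
  simp only [hdeg, sum_ite_mem, univ_inter] at this
  exact ⟨_, this.trans (two_mul _)⟩

lemma IndepSetFreeOn.card_le_eight (hG : G.CliqueFree 3) (h : G.IndepSetFreeOn T 4) :
    #T ≤ 8 := by
  have h9 : #T ≤ 9 := h.card_le_add hG fun _ hS ↦ hS.card_le_five hG
  by_contra! h8
  -- on nine vertices every vertex would have exactly three neighbours: odd degree sum
  have hdeg : ∀ x ∈ T, #(T.filter (G.Adj x)) = 3 := fun x hx ↦ by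
    have := h.card_le_card_filter_adj_add hx fun _ hS ↦ hS.card_le_five hG
    have := h.card_filter_adj_lt hG x
    omega
  have := even_sum_card_filter_adj (G := G) T
  rw [sum_congr rfl hdeg, sum_const, smul_eq_mul, show #T = 9 by omega] at this
  exact absurd this (by decide)

lemma IndepSetFree.card_le_degree_add_nine (hG : G.CliqueFree 3) (h : G.IndepSetFree 5)
    (v : V) : Fintype.card V ≤ G.degree v + 9 := by
  rw [← card_neighborFinset_eq_degree, neighborFinset_eq_filter, ← card_univ]
  exact IndepSetFreeOn.card_le_card_filter_adj_add (fun t _ ↦ h t) (mem_univ v)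
    fun _ hS ↦ hS.card_le_eight hG

lemma exists_isNIndepSet_five_of_isRegularOfDegree_three (hG : G.CliqueFree 3)
    (hreg : G.IsRegularOfDegree 3) (hV : Fintype.card V = 12) : ∃ s, G.IsNIndepSet 5 s := by
  by_contra! hfree
  obtain ⟨v⟩ : Nonempty V := Fintype.card_pos_iff.1 (by omega)
  have hdeg : ∀ x, #(univ.filter (G.Adj x)) = 3 := fun x ↦ by
    rw [← neighborFinset_eq_filter, card_neighborFinset_eq_degree, hreg.degree_eq]
  set N := univ.filter (G.Adj v)
  set M := G.nonNeighborsIn univ v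
  have hM : #M = 8 := by
    have : #N + #M + 1 = #univ := card_filter_adj_add_card_nonNeighborsIn (mem_univ v)
    rw [hdeg, card_univ, hV] at this
    omega
  have hNM : ∀ a ∈ N, #(M.filter (G.Adj a)) = 2 := fun a ha ↦ by
    have : #(univ.filter (G.Adj a)) = 1 + #(M.filter (G.Adj a)) :=
      card_filter_adj_eq_one_add_of_triangleFree hG (mem_univ v) ha
    rw [hdeg] at this
    omega
  have h20 := IndepSetFreeOn.twenty_le_sum_card_filter_adj hG
    (IndepSetFreeOn.nonNeighborsIn (n := 4) (fun t _ ↦ hfree t) (mem_univ v)) hM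
  have := sum_card_filter_adj_eq_of_triangleFree hG (mem_univ v)
  rw [sum_congr rfl fun x _ ↦ hdeg x, sum_congr rfl hNM, sum_const, sum_const, hdeg, card_univ,
    hV, smul_eq_mul, smul_eq_mul] at this
  omega

end SimpleGraph

/-- A triangle-free simple graph on 12 vertices whose independence number is
less than 5 (every independent set has at most 4 vertices) has a vertex of
degree 4. -/
theorem stmt_13 {V : Type*} [Fintype V] [DecidableEq V]
    (G : SimpleGraph V) [DecidableRel G.Adj]
    (hV : Fintype.card V = 12) (hfree : G.CliqueFree 3)
    (hindep : ∀ s : Finset V, (∀ v ∈ s, ∀ w ∈ s, ¬ G.Adj v w) → s.card ≤ 4) :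
    ∃ v : V, G.degree v = 4 := by
  have hα : G.IndepSetFree 5 := fun s hs ↦ by
    have := hindep s fun v hv w hw hvw ↦ hs.isIndepSet hv hw hvw.ne hvw
    have := hs.card_eq
    omega
  by_contra! hdeg
  have hreg : G.IsRegularOfDegree 3 := fun v ↦ by
    have := hα.degree_lt hfree v
    have := hα.card_le_degree_add_nine hfree v
    have := hdeg v
    omega
  obtain ⟨s, hs⟩ := SimpleGraph.exists_isNIndepSet_five_of_isRegularOfDegree_three hfree hreg hV
  exact hα s hs
end

section
/- Let d ≥ 3 and let V = {v₀, v₁, …, v_d} ⊆ ℝ^d be the vertex set of a regular simplex with all pairwise distances equal to 1. Let M be the set of all midpoints (v_i + v_j)/2 of pairs of distinct vertices v_i, v_j ∈ V. Then |M| = (d+1)d/2 and M is a two-distance set: the set of distances between pairs of distinct points of M is exactly {1/2, 1/√2}. In particular, the largest cardinality of a two-distance set in ℝ^d is at least (d+1 choose 2). -/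
/-!
Two distinct edges of a regular simplex with side `s` either share a vertex or are disjoint.
In the first case their midpoints are at distance `s / 2`, half the third side of a triangle.
In the second case the four-point identity
`4 ‖(a + b) / 2 - (c + d) / 2‖² = |ac|² + |ad|² + |bc|² + |bd|² - |ab|² - |cd|²`
gives `4 s² - 2 s² = 2 s²`, i.e. distance `s / √2`. Both values are positive, so distinct edges
have distinct midpoints, and there are `(d + 1).choose 2` of them.
-/

section NormedSpace

variable {E : Type*} [NormedAddCommGroup E] [NormedSpace ℝ E]

theorem dist_midpoint_midpoint_same_left (a b c : E) :
    dist (midpoint ℝ a b) (midpoint ℝ a c) = dist b c / 2 := by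
  rw [dist_eq_norm, ← vsub_eq_sub, midpoint_vsub_midpoint_same_left, norm_smul, vsub_eq_sub,
    ← dist_eq_norm]
  norm_num
  ring

end NormedSpace

section InnerProductSpace

variable {E : Type*} [NormedAddCommGroup E] [InnerProductSpace ℝ E]

theorem four_mul_dist_midpoint_midpoint_sq (a b c d : E) :
    4 * dist (midpoint ℝ a b) (midpoint ℝ c d) ^ 2 =
      dist a c ^ 2 + dist a d ^ 2 + dist b c ^ 2 + dist b d ^ 2 - dist a b ^ 2 - dist c d ^ 2 := by
  simp only [dist_eq_norm, midpoint_eq_smul_add, ← smul_sub, norm_smul, mul_pow,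
    ← real_inner_self_eq_norm_sq, inner_sub_left, inner_sub_right, inner_add_left,
    inner_add_right]
  rw [real_inner_comm b a, real_inner_comm c a, real_inner_comm d a, real_inner_comm c b,
    real_inner_comm d b, real_inner_comm d c]
  norm_num
  ring

theorem dist_midpoint_midpoint_of_pairwise_dist {a b c d : E} {s : ℝ} (hab : dist a b = s)
    (hac : dist a c = s) (had : dist a d = s) (hbc : dist b c = s) (hbd : dist b d = s)
    (hcd : dist c d = s) :
    dist (midpoint ℝ a b) (midpoint ℝ c d) = s / √2 := by
  have hsq := four_mul_dist_midpoint_midpoint_sq a b c d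
  rw [hab, hac, had, hbc, hbd, hcd] at hsq
  have hs : 0 ≤ s := hab ▸ dist_nonneg
  rw [eq_div_iff (by positivity)]
  refine (sq_eq_sq₀ (by positivity) hs).1 ?_
  rw [mul_pow, Real.sq_sqrt zero_le_two]
  linarith

variable {ι : Type*}

def midpoints (v : ι → E) : Set E := {m | ∃ i j, i ≠ j ∧ m = midpoint ℝ (v i) (v j)}

def distances {X : Type*} [PseudoMetricSpace X] (S : Set X) : Set ℝ :=
  {e | ∃ p ∈ S, ∃ q ∈ S, p ≠ q ∧ dist p q = e}

noncomputable def pairMidpoint (v : ι → E) : Sym2 ι → E :=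
  Sym2.lift ⟨fun i j => midpoint ℝ (v i) (v j), fun i j => midpoint_comm (v i) (v j)⟩

@[simp]
theorem pairMidpoint_mk (v : ι → E) (i j : ι) :
    pairMidpoint v s(i, j) = midpoint ℝ (v i) (v j) :=
  rfl

theorem midpoints_eq_image (v : ι → E) : midpoints v = pairMidpoint v '' Sym2.diagSetᶜ := by
  ext m
  constructor
  · rintro ⟨i, j, hij, rfl⟩
    exact ⟨s(i, j), by simpa using hij, rfl⟩
  · rintro ⟨z, hz, rfl⟩
    induction z using Sym2.ind with
    | _ i j => exact ⟨i, j, by simpa using hz, rfl⟩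

variable {v : ι → E} {s : ℝ} (hv : ∀ i j, i ≠ j → dist (v i) (v j) = s)
include hv

theorem dist_pairMidpoint_of_mem {z w : Sym2 ι} (hzw : z ≠ w) {a : ι} (hz : a ∈ z)
    (hw : a ∈ w) :
    dist (pairMidpoint v z) (pairMidpoint v w) = s / 2 := by
  rw [← Sym2.other_spec hz, ← Sym2.other_spec hw] at hzw ⊢
  rw [pairMidpoint_mk, pairMidpoint_mk, dist_midpoint_midpoint_same_left,
    hv _ _ fun h => hzw (by rw [h])]

theorem dist_pairMidpoint_of_disjoint {z w : Sym2 ι} (hz : ¬z.IsDiag) (hw : ¬w.IsDiag)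
    (hzw : ∀ a ∈ z, a ∉ w) :
    dist (pairMidpoint v z) (pairMidpoint v w) = s / √2 := by
  induction z using Sym2.ind with | _ i j =>
  induction w using Sym2.ind with | _ k l =>
  simp only [Sym2.mk_isDiag_iff, Sym2.mem_iff, forall_eq_or_imp, forall_eq, not_or] at hz hw hzw
  exact dist_midpoint_midpoint_of_pairwise_dist (hv i j hz) (hv i k hzw.1.1) (hv i l hzw.1.2)
    (hv j k hzw.2.1) (hv j l hzw.2.2) (hv k l hw)

theorem dist_pairMidpoint_eq_or {z w : Sym2 ι} (hz : ¬z.IsDiag) (hw : ¬w.IsDiag)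
    (hzw : z ≠ w) :
    dist (pairMidpoint v z) (pairMidpoint v w) = s / 2 ∨
      dist (pairMidpoint v z) (pairMidpoint v w) = s / √2 := by
  by_cases hshare : ∃ a ∈ z, a ∈ w
  · obtain ⟨a, haz, haw⟩ := hshare
    exact .inl (dist_pairMidpoint_of_mem hv hzw haz haw)
  · simp only [not_exists, not_and] at hshare
    exact .inr (dist_pairMidpoint_of_disjoint hv hz hw hshare)

theorem injOn_pairMidpoint (hs : 0 < s) : Set.InjOn (pairMidpoint v) Sym2.diagSetᶜ := by
  intro z hz w hw hzw
  by_contra hne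
  rcases dist_pairMidpoint_eq_or hv hz hw hne with h | h <;>
    · rw [hzw, dist_self] at h
      have : 0 < s / √2 := by positivity
      linarith

theorem ncard_midpoints [Fintype ι] (hs : 0 < s) :
    (midpoints v).ncard = (Fintype.card ι).choose 2 := by
  classical
  rw [midpoints_eq_image, (injOn_pairMidpoint hv hs).ncard_image, ← Nat.card_coe_set_eq,
    Nat.card_eq_fintype_card, Sym2.card_diagSet_compl]

theorem distances_midpoints [Fintype ι] (hs : 0 < s) (hι : 4 ≤ Fintype.card ι) :
    distances (midpoints v) = {s / 2, s / √2} := by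
  obtain ⟨e⟩ := Function.Embedding.nonempty_of_card_le (α := Fin 4) (by simpa using hι)
  have hmem (a b : Fin 4) (hab : a ≠ b) : pairMidpoint v s(e a, e b) ∈ midpoints v :=
    ⟨e a, e b, e.injective.ne hab, rfl⟩
  ext r
  constructor
  · rintro ⟨p, hp, q, hq, hpq, rfl⟩
    rw [midpoints_eq_image] at hp hq
    obtain ⟨z, hz, rfl⟩ := hp
    obtain ⟨w, hw, rfl⟩ := hq
    exact dist_pairMidpoint_eq_or hv hz hw (ne_of_apply_ne _ hpq)
  · rintro (rfl | rfl)
    · have h := dist_pairMidpoint_of_mem hv (z := s(e 0, e 1)) (w := s(e 0, e 2)) (by simp)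
        (Sym2.mem_mk_left _ _) (Sym2.mem_mk_left _ _)
      exact ⟨_, hmem 0 1 (by decide), _, hmem 0 2 (by decide),
        dist_pos.1 (by rw [h]; positivity), h⟩
    · have h := dist_pairMidpoint_of_disjoint hv (z := s(e 0, e 1)) (w := s(e 2, e 3)) (by simp)
        (by simp) (by simp)
      exact ⟨_, hmem 0 1 (by decide), _, hmem 2 3 (by decide),
        dist_pos.1 (by rw [h]; positivity), h⟩

theorem ncard_distances_midpoints [Fintype ι] (hs : 0 < s) (hι : 4 ≤ Fintype.card ι) :
    (distances (midpoints v)).ncard = 2 := by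
  rw [distances_midpoints hv hs hι]
  have hsqrt : √2 < 2 := by
    rw [Real.sqrt_lt' two_pos]
    norm_num
  exact Set.ncard_pair (div_lt_div_of_pos_left hs (by positivity) hsqrt).ne

end InnerProductSpace

/-- Let `v₀, …, v_d` (`d ≥ 3`) be the vertices of a regular simplex in `ℝ^d`
with all pairwise distances `1`, and let `M` be the set of midpoints of pairs of
distinct vertices.  Then `|M| = (d+1)d/2`, the set of distances between distinct
points of `M` is exactly `{1/2, 1/√2}` (so `M` is a two-distance set), and hence
there exists a two-distance set in `ℝ^d` of cardinality `(d+1).choose 2`. -/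
theorem stmt_19 (d : ℕ) (hd : 3 ≤ d) (v : Fin (d + 1) → EuclideanSpace ℝ (Fin d))
    (hv : ∀ i j, i ≠ j → dist (v i) (v j) = 1) :
    {m : EuclideanSpace ℝ (Fin d) |
        ∃ i j, i ≠ j ∧ m = midpoint ℝ (v i) (v j)}.ncard = (d + 1) * d / 2 ∧
    {e : ℝ | ∃ p ∈ {m : EuclideanSpace ℝ (Fin d) | ∃ i j, i ≠ j ∧ m = midpoint ℝ (v i) (v j)},
        ∃ q ∈ {m : EuclideanSpace ℝ (Fin d) | ∃ i j, i ≠ j ∧ m = midpoint ℝ (v i) (v j)},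
        p ≠ q ∧ dist p q = e} = {1 / 2, (Real.sqrt 2)⁻¹} ∧
    (∃ X : Set (EuclideanSpace ℝ (Fin d)), X.Finite ∧ X.ncard = (d + 1).choose 2 ∧
      {e : ℝ | ∃ p ∈ X, ∃ q ∈ X, p ≠ q ∧ dist p q = e}.ncard = 2) := by
  have hcard : (midpoints v).ncard = (d + 1).choose 2 := by
    simpa using ncard_midpoints hv one_pos
  have h4 : 4 ≤ Fintype.card (Fin (d + 1)) := by
    rw [Fintype.card_fin]
    omega
  have hdist : distances (midpoints v) = {1 / 2, (√2)⁻¹} := by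
    rw [distances_midpoints hv one_pos h4, one_div √2]
  refine ⟨hcard.trans (Nat.choose_two_right _), hdist, midpoints v, ?_, hcard,
    ncard_distances_midpoints hv one_pos h4⟩
  rw [midpoints_eq_image]
  exact (Set.toFinite _).image _
end
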